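/- arXiv:1703.00718 — 4 statements merged into one kernel-verified Lean document; each statement's English description precedes it below -/
import Mathlib

section
/- Let f(t) ∈ F[t] = F[t;σ] ⊂ K[t;σ] be monic of degree m ≥ 2 with all coefficients in F. Then the set F ⊕ Ft ⊕ ··· ⊕ Ft^{m−1} of elements Σ_{i=0}^{m−1} a_i t^i of S_f with all a_i ∈ F is a commutative subring of S_f isomorphic to the quotient ring F[t]/(f(t)), and it is contained in the right nucleus Nuc_r(S_f); in particular t ∈ Nuc_r(S_f), so all powers of t in S_f are associative and t^m ∘ t = t ∘ t^m. If moreover f(t) is irreducible in F[t], then this subring is a field extension of F of degree m contained in Nuc_r(S_f). -/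
/-! ## The Petit algebra `S_f = K[t;σ]/K[t;σ]f`

For a twisted polynomial ring `R = K[t;σ]` (multiplication determined by `t·a = σ(a)·t`)
and the monic skew polynomial `f(t) = t^m - Σ_{i<m} a_i t^i` (encoded by its coefficient
vector `a : Fin m → K`), the Petit algebra `S_f` is realised on coefficient vectors
`Fin m → K` (the polynomials of degree `< m`), with multiplication `g ∘ h = (gh) mod_r f`. -/

/-- The remainder of `t^s` after right division by `f(t) = t^m - Σ_{i<m} a_i t^i`:
for `s < m` it is `t^s` itself, and for `s ≥ m` one uses
`t^s ≡ Σ_i σ^{s-m}(a_i) t^{s-m+i} (mod R·f)`. -/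
noncomputable def tred {K : Type*} [Field K] (σ : K → K) (m : ℕ) (a : Fin m → K) (s : ℕ) :
    Fin m → K :=
  if _h : s < m then (fun i => if (i : ℕ) = s then (1 : K) else 0)
  else ∑ i : Fin m, σ^[s - m] (a i) • tred σ m a (s - m + (i : ℕ))
termination_by s
decreasing_by
  have hi := i.isLt
  omega

/-- The multiplication `g ∘ h = (gh) mod_r f` of the Petit algebra `S_f`. -/
noncomputable def pmul {K : Type*} [Field K] (σ : K → K) {m : ℕ} (a : Fin m → K)
    (x y : Fin m → K) : Fin m → K :=
  ∑ i : Fin m, ∑ j : Fin m, (x i * σ^[(i : ℕ)] (y j)) • tred σ m a ((i : ℕ) + (j : ℕ))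

/-- The unit element `1` of `S_f`. -/
noncomputable def pone (K : Type*) [Field K] (m : ℕ) : Fin m → K :=
  fun i => if (i : ℕ) = 0 then 1 else 0

/-- The element `t` of `S_f`. -/
noncomputable def tvec (K : Type*) [Field K] (m : ℕ) : Fin m → K :=
  fun i => if (i : ℕ) = 1 then 1 else 0

/-- The canonical copy of `c ∈ K` inside `S_f`. -/
noncomputable def iota (K : Type*) [Field K] (m : ℕ) (c : K) : Fin m → K :=
  fun i => if (i : ℕ) = 0 then c else 0

/-- `S_f` is associative; by Petit's theorem this holds if and only if `f` is
invariant (i.e. `R·f` is a two-sided ideal of `R = K[t;σ]`). -/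
def PAssoc {K : Type*} [Field K] (σ : K → K) {m : ℕ} (a : Fin m → K) : Prop :=
  ∀ x y z : Fin m → K, pmul σ a (pmul σ a x y) z = pmul σ a x (pmul σ a y z)

/-- `H` is an automorphism of the algebra `S_f` over `F = Fix(σ)`: an `F`-linear
bijection preserving the multiplication and the unit. -/
structure IsPetitAut {K : Type*} [Field K] (σ : K → K) {m : ℕ} (a : Fin m → K)
    (H : (Fin m → K) → (Fin m → K)) : Prop where
  bijective : Function.Bijective H
  map_add : ∀ x y, H (x + y) = H x + H y
  map_smul : ∀ c : K, σ c = c → ∀ x, H (c • x) = c • H x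
  map_mul : ∀ x y, H (pmul σ a x y) = pmul σ a (H x) (H y)
  map_one : H (pone K m) = pone K m

/-- `H` is an inner automorphism `x ↦ (c_l ∘ x) ∘ c` of `S_f`, where `c_l` is a
left inverse of `c`. -/
def IsInnerPetit {K : Type*} [Field K] (σ : K → K) {m : ℕ} (a : Fin m → K)
    (H : (Fin m → K) → (Fin m → K)) : Prop :=
  ∃ c cl : Fin m → K, pmul σ a cl c = pone K m ∧
    ∀ x, H x = pmul σ a (pmul σ a cl x) c

/-- The map `H_{τ,k} : Σ x_i t^i ↦ τ(x_0) + Σ_{i≥1} τ(x_i)·(Π_{l<i} σ^l(k))·t^i`. -/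
noncomputable def Hmap {K : Type*} [Field K] (σ τ : K → K) {m : ℕ} (k : K)
    (x : Fin m → K) : Fin m → K :=
  fun i => τ (x i) * ∏ l ∈ Finset.range (i : ℕ), σ^[l] k

/-- The fixed field `F = Fix(σ)` as a subfield of `K`. -/
def FixSub {K : Type*} [Field K] (σ : K ≃+* K) : Subfield K where
  carrier := {x | σ x = x}
  mul_mem' := by intro x y hx hy; simp only [Set.mem_setOf_eq, map_mul] at *; rw [hx, hy]
  one_mem' := by simp
  add_mem' := by intro x y hx hy; simp only [Set.mem_setOf_eq, map_add] at *; rw [hx, hy]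
  zero_mem' := by simp
  neg_mem' := by intro x hx; simp only [Set.mem_setOf_eq, map_neg] at *; rw [hx]
  inv_mem' := by intro x hx; simp only [Set.mem_setOf_eq, map_inv₀] at *; rw [hx]

/-- Left-bracketed powers of `t` in `S_f`. -/
noncomputable def tpowP {K : Type*} [Field K] (σ : K → K) {m : ℕ} (a : Fin m → K) :
    ℕ → Fin m → K
  | 0 => pone K m
  | (s + 1) => pmul σ a (tpowP σ a s) (tvec K m)

section PetitAux

variable {K : Type*} [Field K] (σ : K ≃+* K) (m : ℕ) (a : Fin m → K)

lemma tred_lt {s : ℕ} (h : s < m) :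
    tred ⇑σ m a s = fun i : Fin m => if (i : ℕ) = s then (1 : K) else 0 := by
  rw [tred.eq_def]; simp [h]

lemma tred_ge {s : ℕ} (h : ¬ s < m) :
    tred ⇑σ m a s = ∑ i : Fin m, (⇑σ)^[s - m] (a i) • tred ⇑σ m a (s - m + (i : ℕ)) := by
  rw [tred.eq_def]; simp [h]

lemma tred_fix (ha : ∀ i, σ (a i) = a i) :
    ∀ s k, σ (tred ⇑σ m a s k) = tred ⇑σ m a s k := by
  intro s
  induction s using Nat.strong_induction_on with
  | _ s ih =>
    intro k
    by_cases h : s < m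
    · rw [tred_lt σ m a h]
      dsimp only
      split <;> simp
    · rw [tred_ge σ m a h, Finset.sum_apply, map_sum]
      refine Finset.sum_congr rfl fun i _ => ?_
      have hi := i.isLt
      rw [Pi.smul_apply, smul_eq_mul, map_mul, Function.iterate_fixed (ha i),
        ih _ (by omega) k, ha i]

lemma tred_key (ha : ∀ i, σ (a i) = a i) (i : ℕ) :
    ∀ s, (∑ k : Fin m, tred ⇑σ m a s k • tred ⇑σ m a (i + (k : ℕ)))
      = tred ⇑σ m a (i + s) := by
  intro s
  induction s using Nat.strong_induction_on with
  | _ s ih =>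
    by_cases h : s < m
    · rw [tred_lt σ m a h]
      rw [Finset.sum_eq_single (⟨s, h⟩ : Fin m)]
      · simp
      · intro b _ hb
        have hb' : (b : ℕ) ≠ s := fun hh => hb (Fin.ext hh)
        simp [hb']
      · simp
    · have h2 : ¬ i + s < m := by omega
      rw [tred_ge σ m a h, tred_ge σ m a h2]
      simp only [Finset.sum_apply, Pi.smul_apply, smul_eq_mul, Finset.sum_smul, mul_smul]
      rw [Finset.sum_comm]
      refine Finset.sum_congr rfl fun p _ => ?_
      rw [← Finset.smul_sum, ih (s - m + (p : ℕ)) (by have := p.isLt; omega)]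
      rw [Function.iterate_fixed (ha p), Function.iterate_fixed (ha p)]
      have h3 : i + (s - m + (p : ℕ)) = i + s - m + (p : ℕ) := by omega
      rw [h3]

lemma iter_sum {ι : Type*} (s : Finset ι) (g : ι → K) (n : ℕ) :
    (⇑σ)^[n] (∑ i ∈ s, g i) = ∑ i ∈ s, (⇑σ)^[n] (g i) := by
  induction n with
  | zero => simp
  | succ n ih =>
    rw [Function.iterate_succ_apply', ih, map_sum]
    exact Finset.sum_congr rfl fun i _ => (Function.iterate_succ_apply' _ _ _).symm

lemma pdecomp (x : Fin m → K) : x = ∑ i : Fin m, x i • tred ⇑σ m a (i : ℕ) := by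
  funext k
  rw [Finset.sum_apply]
  have h1 : ∀ i : Fin m, (x i • tred ⇑σ m a (i : ℕ)) k = if k = i then x i else 0 := by
    intro i
    rw [tred_lt σ m a i.isLt, Pi.smul_apply]
    by_cases h : k = i
    · simp [h]
    · have h' : (k : ℕ) ≠ (i : ℕ) := fun hh => h (Fin.ext hh)
      simp [h, h']
  rw [Finset.sum_congr rfl fun i _ => h1 i, Finset.sum_ite_eq]
  simp

lemma pmul_sum_left {ι : Type*} (s : Finset ι) (g : ι → (Fin m → K)) (y : Fin m → K) :
    pmul ⇑σ a (∑ i ∈ s, g i) y = ∑ i ∈ s, pmul ⇑σ a (g i) y := by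
  simp only [pmul, Finset.sum_apply, Finset.sum_mul, Finset.sum_smul]
  rw [Finset.sum_congr rfl fun k (_ : k ∈ Finset.univ) => Finset.sum_comm, Finset.sum_comm]

lemma pmul_sum_right {ι : Type*} (s : Finset ι) (g : ι → (Fin m → K)) (x : Fin m → K) :
    pmul ⇑σ a x (∑ i ∈ s, g i) = ∑ i ∈ s, pmul ⇑σ a x (g i) := by
  simp only [pmul, Finset.sum_apply, iter_sum σ, Finset.mul_sum, Finset.sum_smul]
  rw [Finset.sum_congr rfl fun k (_ : k ∈ Finset.univ) => Finset.sum_comm, Finset.sum_comm]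

lemma pmul_smul_left (c : K) (x y : Fin m → K) :
    pmul ⇑σ a (c • x) y = c • pmul ⇑σ a x y := by
  simp only [pmul, Pi.smul_apply, smul_eq_mul, Finset.smul_sum, mul_assoc, mul_smul]

lemma pmul_smul_right {c : K} (hc : σ c = c) (x y : Fin m → K) :
    pmul ⇑σ a x (c • y) = c • pmul ⇑σ a x y := by
  unfold pmul
  rw [Finset.smul_sum]
  refine Finset.sum_congr rfl fun i _ => ?_
  rw [Finset.smul_sum]
  refine Finset.sum_congr rfl fun j _ => ?_
  rw [Pi.smul_apply, smul_eq_mul, iterate_map_mul, Function.iterate_fixed hc, smul_smul]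
  congr 1
  ring

lemma pmul_zero_left (y : Fin m → K) : pmul ⇑σ a 0 y = 0 := by
  simp [pmul]

lemma pmul_single_left (i : Fin m) (y : Fin m → K) :
    pmul ⇑σ a (tred ⇑σ m a (i : ℕ)) y
      = ∑ l : Fin m, (⇑σ)^[(i : ℕ)] (y l) • tred ⇑σ m a ((i : ℕ) + (l : ℕ)) := by
  unfold pmul
  rw [Finset.sum_eq_single i]
  · refine Finset.sum_congr rfl fun l _ => ?_
    rw [tred_lt σ m a i.isLt]
    simp
  · intro b _ hb
    have hb' : (b : ℕ) ≠ (i : ℕ) := fun hh => hb (Fin.ext hh)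
    rw [tred_lt σ m a i.isLt]
    simp [hb']
  · simp

lemma pmul_tred (ha : ∀ i, σ (a i) = a i) : ∀ s t : ℕ,
    pmul ⇑σ a (tred ⇑σ m a s) (tred ⇑σ m a t) = tred ⇑σ m a (s + t) := by
  intro s t
  unfold pmul
  calc (∑ k : Fin m, ∑ l : Fin m,
        (tred ⇑σ m a s k * (⇑σ)^[(k:ℕ)] (tred ⇑σ m a t l)) • tred ⇑σ m a ((k:ℕ) + (l:ℕ)))
      = ∑ l : Fin m, tred ⇑σ m a t l •
          ∑ k : Fin m, tred ⇑σ m a s k • tred ⇑σ m a ((l:ℕ) + (k:ℕ)) := by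
        rw [Finset.sum_comm]
        refine Finset.sum_congr rfl fun l _ => ?_
        rw [Finset.smul_sum]
        refine Finset.sum_congr rfl fun k _ => ?_
        rw [Function.iterate_fixed (tred_fix σ m a ha t l), mul_comm, mul_smul]
        have h1 : (k:ℕ) + (l:ℕ) = (l:ℕ) + (k:ℕ) := by omega
        rw [h1]
    _ = ∑ l : Fin m, tred ⇑σ m a t l • tred ⇑σ m a (s + (l:ℕ)) := by
        refine Finset.sum_congr rfl fun l _ => ?_
        rw [tred_key σ m a ha (l:ℕ) s]
        have h1 : (l:ℕ) + s = s + (l:ℕ) := by omega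
        rw [h1]
    _ = tred ⇑σ m a (s + t) := tred_key σ m a ha s t

end PetitAux
section PetitAux2

variable {K : Type*} [Field K] (σ : K ≃+* K) (m : ℕ) (a : Fin m → K)

lemma fix_of_mem {c : K} (hc : c ∈ FixSub σ) : σ c = c := hc

lemma pmul_twist (i : Fin m) (c : K) (y : Fin m → K) :
    pmul ⇑σ a (tred ⇑σ m a (i : ℕ)) (c • y)
      = (⇑σ)^[(i : ℕ)] c • pmul ⇑σ a (tred ⇑σ m a (i : ℕ)) y := by
  rw [pmul_single_left, pmul_single_left, Finset.smul_sum]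
  refine Finset.sum_congr rfl fun l _ => ?_
  rw [Pi.smul_apply, smul_eq_mul, iterate_map_mul, smul_smul]

lemma passoc (ha : ∀ i, σ (a i) = a i) (x y z : Fin m → K) (hz : ∀ l, σ (z l) = z l) :
    pmul ⇑σ a (pmul ⇑σ a x y) z = pmul ⇑σ a x (pmul ⇑σ a y z) := by
  have key : ∀ n : Fin m, ∀ x y : Fin m → K,
      pmul ⇑σ a (pmul ⇑σ a x y) (tred ⇑σ m a (n : ℕ))
        = pmul ⇑σ a x (pmul ⇑σ a y (tred ⇑σ m a (n : ℕ))) := by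
    intro n x y
    have hxL : pmul ⇑σ a (pmul ⇑σ a x y) (tred ⇑σ m a (n:ℕ))
        = ∑ i : Fin m, x i •
            pmul ⇑σ a (pmul ⇑σ a (tred ⇑σ m a (i:ℕ)) y) (tred ⇑σ m a (n:ℕ)) := by
      conv_lhs => rw [pdecomp σ m a x]
      rw [pmul_sum_left, pmul_sum_left]
      exact Finset.sum_congr rfl fun i _ => by rw [pmul_smul_left, pmul_smul_left]
    have hxR : pmul ⇑σ a x (pmul ⇑σ a y (tred ⇑σ m a (n:ℕ)))
        = ∑ i : Fin m, x i •
            pmul ⇑σ a (tred ⇑σ m a (i:ℕ)) (pmul ⇑σ a y (tred ⇑σ m a (n:ℕ))) := by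
      conv_lhs => rw [pdecomp σ m a x]
      rw [pmul_sum_left]
      exact Finset.sum_congr rfl fun i _ => by rw [pmul_smul_left]
    rw [hxL, hxR]
    refine Finset.sum_congr rfl fun i _ => ?_
    congr 1
    have hL2 : pmul ⇑σ a (pmul ⇑σ a (tred ⇑σ m a (i:ℕ)) y) (tred ⇑σ m a (n:ℕ))
        = ∑ j : Fin m, (⇑σ)^[(i:ℕ)] (y j) • tred ⇑σ m a ((i:ℕ) + (j:ℕ) + (n:ℕ)) := by
      conv_lhs => rw [pdecomp σ m a y]
      rw [pmul_sum_right, Finset.sum_congr rfl fun j (_ : j ∈ Finset.univ) =>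
        by rw [pmul_twist, pmul_tred σ m a ha], pmul_sum_left]
      exact Finset.sum_congr rfl fun j _ => by
        rw [pmul_smul_left, pmul_tred σ m a ha]
    have hR2 : pmul ⇑σ a (tred ⇑σ m a (i:ℕ)) (pmul ⇑σ a y (tred ⇑σ m a (n:ℕ)))
        = ∑ j : Fin m, (⇑σ)^[(i:ℕ)] (y j) • tred ⇑σ m a ((i:ℕ) + ((j:ℕ) + (n:ℕ))) := by
      conv_lhs => rw [pdecomp σ m a y]
      rw [pmul_sum_left, Finset.sum_congr rfl fun j (_ : j ∈ Finset.univ) =>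
        by rw [pmul_smul_left, pmul_tred σ m a ha], pmul_sum_right]
      exact Finset.sum_congr rfl fun j _ => by
        rw [pmul_twist, pmul_tred σ m a ha]
    rw [hL2, hR2]
    exact Finset.sum_congr rfl fun j _ => by rw [add_assoc]
  have hL : pmul ⇑σ a (pmul ⇑σ a x y) z
      = ∑ l : Fin m, z l • pmul ⇑σ a (pmul ⇑σ a x y) (tred ⇑σ m a (l:ℕ)) := by
    conv_lhs => rw [pdecomp σ m a z]
    rw [pmul_sum_right]
    exact Finset.sum_congr rfl fun l _ => pmul_smul_right σ m a (hz l) _ _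
  have hR : pmul ⇑σ a x (pmul ⇑σ a y z)
      = ∑ l : Fin m, z l • pmul ⇑σ a x (pmul ⇑σ a y (tred ⇑σ m a (l:ℕ))) := by
    conv_lhs => rw [pdecomp σ m a z]
    rw [pmul_sum_right σ m a _ _ y,
      Finset.sum_congr rfl fun l (_ : l ∈ Finset.univ) => pmul_smul_right σ m a (hz l) y _,
      pmul_sum_right]
    exact Finset.sum_congr rfl fun l _ => pmul_smul_right σ m a (hz l) _ _
  rw [hL, hR]
  exact Finset.sum_congr rfl fun l _ => by rw [key l x y]

lemma pmul_fix (ha : ∀ i, σ (a i) = a i) (x y : Fin m → K)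
    (hx : ∀ i, σ (x i) = x i) (hy : ∀ j, σ (y j) = y j) :
    ∀ k, σ (pmul ⇑σ a x y k) = pmul ⇑σ a x y k := by
  intro k
  unfold pmul
  rw [Finset.sum_apply, map_sum]
  refine Finset.sum_congr rfl fun i _ => ?_
  rw [Finset.sum_apply, map_sum]
  refine Finset.sum_congr rfl fun j _ => ?_
  rw [Pi.smul_apply, smul_eq_mul, Function.iterate_fixed (hy j), map_mul, map_mul, hx i, hy j,
    tred_fix σ m a ha]

lemma pcomm (x y : Fin m → K) (hx : ∀ i, σ (x i) = x i) (hy : ∀ j, σ (y j) = y j) :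
    pmul ⇑σ a x y = pmul ⇑σ a y x := by
  unfold pmul
  rw [Finset.sum_comm]
  refine Finset.sum_congr rfl fun j _ => Finset.sum_congr rfl fun i _ => ?_
  rw [Function.iterate_fixed (hy j), Function.iterate_fixed (hx i), mul_comm]
  have h1 : (i:ℕ) + (j:ℕ) = (j:ℕ) + (i:ℕ) := by omega
  rw [h1]

lemma pone_eq (hm : 0 < m) : pone K m = tred ⇑σ m a 0 := by
  rw [tred_lt σ m a hm]; rfl

lemma tvec_eq (hm : 1 < m) : tvec K m = tred ⇑σ m a 1 := by
  rw [tred_lt σ m a hm]; rfl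

lemma tpow_eq (hm : 2 ≤ m) (ha : ∀ i, σ (a i) = a i) :
    ∀ s, tpowP ⇑σ a s = tred ⇑σ m a s := by
  intro s
  induction s with
  | zero => exact pone_eq σ m a (by omega)
  | succ s ih =>
    show pmul ⇑σ a (tpowP ⇑σ a s) (tvec K m) = _
    rw [ih, tvec_eq σ m a (by omega), pmul_tred σ m a ha]

end PetitAux2

section PetitPsi

variable {K : Type*} [Field K] (σ : K ≃+* K) (m : ℕ) (a : Fin m → K)

noncomputable def psi (p : Polynomial (FixSub σ)) : Fin m → K :=
  p.sum fun s c => (c : K) • tred ⇑σ m a s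

lemma psi_add (p q : Polynomial (FixSub σ)) :
    psi σ m a (p + q) = psi σ m a p + psi σ m a q := by
  unfold psi
  apply Polynomial.sum_add_index <;> intros <;> push_cast <;> simp [add_smul]

noncomputable def psiHom : Polynomial (FixSub σ) →+ (Fin m → K) :=
  AddMonoidHom.mk' (psi σ m a) (psi_add σ m a)

lemma psi_sum {ι : Type*} (s : Finset ι) (g : ι → Polynomial (FixSub σ)) :
    psi σ m a (∑ i ∈ s, g i) = ∑ i ∈ s, psi σ m a (g i) :=
  map_sum (psiHom σ m a) g s

lemma psi_sub (p q : Polynomial (FixSub σ)) :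
    psi σ m a (p - q) = psi σ m a p - psi σ m a q :=
  map_sub (psiHom σ m a) p q

lemma psi_zero : psi σ m a 0 = 0 := Polynomial.sum_zero_index _

lemma psi_monomial (s : ℕ) (c : FixSub σ) :
    psi σ m a (Polynomial.monomial s c) = (c : K) • tred ⇑σ m a s := by
  unfold psi
  rw [Polynomial.sum_monomial_index]
  simp

lemma psi_def (p : Polynomial (FixSub σ)) :
    psi σ m a p = ∑ i ∈ p.support, (p.coeff i : K) • tred ⇑σ m a i :=
  Polynomial.sum_def _ _

lemma psi_mul (ha : ∀ i, σ (a i) = a i) (p q : Polynomial (FixSub σ)) :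
    psi σ m a (p * q) = pmul ⇑σ a (psi σ m a p) (psi σ m a q) := by
  rw [Polynomial.mul_eq_sum_sum, psi_sum]
  have hq : ∀ i : ℕ, psi σ m a (q.sum fun j d => Polynomial.monomial (i+j) (p.coeff i * d))
      = ∑ j ∈ q.support, ((p.coeff i : K) * (q.coeff j : K)) • tred ⇑σ m a (i + j) := by
    intro i
    rw [Polynomial.sum_def, psi_sum]
    refine Finset.sum_congr rfl fun j _ => ?_
    rw [psi_monomial]
    norm_cast
  rw [Finset.sum_congr rfl fun i (_ : i ∈ p.support) => hq i]
  rw [psi_def σ m a p, psi_def σ m a q, pmul_sum_left]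
  refine Finset.sum_congr rfl fun i _ => ?_
  rw [pmul_smul_left, pmul_sum_right, Finset.smul_sum]
  refine Finset.sum_congr rfl fun j _ => ?_
  rw [pmul_smul_right σ m a (fix_of_mem σ (q.coeff j).2), pmul_tred σ m a ha, smul_smul]

lemma psi_apply_eq (p : Polynomial (FixSub σ)) (hp : ∀ s ∈ p.support, s < m) (k : Fin m) :
    psi σ m a p k = (p.coeff (k : ℕ) : K) := by
  rw [psi_def, Finset.sum_apply]
  have h1 : ∀ s ∈ p.support, ((p.coeff s : K) • tred ⇑σ m a s) k
      = if (k : ℕ) = s then (p.coeff s : K) else 0 := by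
    intro s hs
    rw [tred_lt σ m a (hp s hs), Pi.smul_apply]
    by_cases h : (k : ℕ) = s <;> simp [h]
  rw [Finset.sum_congr rfl h1, Finset.sum_ite_eq]
  by_cases h : (k : ℕ) ∈ p.support
  · simp [h]
  · simp [h, Polynomial.notMem_support_iff.mp h]

lemma psi_X_pow (s : ℕ) : psi σ m a (Polynomial.X ^ s) = tred ⇑σ m a s := by
  rw [Polynomial.X_pow_eq_monomial, psi_monomial]
  simp

end PetitPsi
section PetitPsi2

variable {K : Type*} [Field K] (σ : K ≃+* K) (m : ℕ) (a : Fin m → K)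

lemma psi_fix (ha : ∀ i, σ (a i) = a i) (p : Polynomial (FixSub σ)) :
    ∀ k, σ (psi σ m a p k) = psi σ m a p k := by
  intro k
  rw [psi_def, Finset.sum_apply, map_sum]
  refine Finset.sum_congr rfl fun s _ => ?_
  rw [Pi.smul_apply, smul_eq_mul, map_mul, tred_fix σ m a ha,
    fix_of_mem σ (p.coeff s).2]

end PetitPsi2
set_option maxHeartbeats 1000000 in
set_option synthInstance.maxHeartbeats 1000000 in
/-- **Proposition 1.2.** Let `f(t) = t^m − Σ_{i<m} a_i t^i ∈ F[t] ⊆ K[t;σ]` be monic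
of degree `m ≥ 2` with all coefficients in `F = Fix(σ)`.  Then
`S = F ⊕ Ft ⊕ ⋯ ⊕ Ft^{m−1}` is a commutative subring of `S_f` isomorphic to
`F[t]/(f(t))` and contained in `Nuc_r(S_f)`; in particular `t ∈ Nuc_r(S_f)`, all
powers of `t` are associative, and `t^m ∘ t = t ∘ t^m`.  If moreover `f` is
irreducible in `F[t]`, this subring is a field extension of `F` of degree `m`
contained in `Nuc_r(S_f)`. -/
theorem stmt2 {K : Type*} [Field K] (σ : K ≃+* K) (hσ : σ ≠ RingEquiv.refl K)
    (m : ℕ) (hm : 2 ≤ m) (a : Fin m → K) (ha : ∀ i, a i ∈ FixSub σ) :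
    let Fq := FixSub σ
    let f' : Polynomial Fq := Polynomial.X ^ m -
      ∑ i : Fin m, Polynomial.C (⟨a i, ha i⟩ : Fq) * Polynomial.X ^ (i : ℕ)
    let S : Set (Fin m → K) := {x | ∀ i, σ (x i) = x i}
    -- `S` is a commutative subring of `S_f`
    (pone K m ∈ S)
    ∧ (∀ x ∈ S, ∀ y ∈ S, x + y ∈ S)
    ∧ (∀ x ∈ S, -x ∈ S)
    ∧ (∀ x ∈ S, ∀ y ∈ S, pmul (⇑σ) a x y ∈ S)
    ∧ (∀ x ∈ S, ∀ y ∈ S, pmul (⇑σ) a x y = pmul (⇑σ) a y x)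
    -- `S` is isomorphic to the quotient ring `F[t]/(f(t))`
    ∧ (∃ φ : (Polynomial Fq ⧸ Ideal.span {f'}) → (Fin m → K),
        Function.Injective φ ∧ Set.range φ = S ∧ φ 1 = pone K m ∧
        (∀ p q, φ (p + q) = φ p + φ q) ∧
        (∀ p q, φ (p * q) = pmul (⇑σ) a (φ p) (φ q)))
    -- `S ⊆ Nuc_r(S_f)`
    ∧ (∀ z ∈ S, ∀ x y : Fin m → K,
        pmul (⇑σ) a (pmul (⇑σ) a x y) z = pmul (⇑σ) a x (pmul (⇑σ) a y z))
    -- `t ∈ Nuc_r(S_f)`, the powers of `t` are associative, and `t^m t = t t^m`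
    ∧ (∀ x y : Fin m → K,
        pmul (⇑σ) a (pmul (⇑σ) a x y) (tvec K m)
          = pmul (⇑σ) a x (pmul (⇑σ) a y (tvec K m)))
    ∧ (∀ i j : ℕ, pmul (⇑σ) a (tpowP (⇑σ) a i) (tpowP (⇑σ) a j) = tpowP (⇑σ) a (i + j))
    ∧ (pmul (⇑σ) a (tpowP (⇑σ) a m) (tvec K m) = pmul (⇑σ) a (tvec K m) (tpowP (⇑σ) a m))
    -- `f` irreducible in `F[t]`: a field extension of `F` of degree `m` inside `Nuc_r`
    ∧ (Irreducible f' →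
        (∀ z ∈ S, z ≠ 0 → ∃ z' ∈ S,
          pmul (⇑σ) a z z' = pone K m ∧ pmul (⇑σ) a z' z = pone K m) ∧
        Module.finrank Fq (Polynomial Fq ⧸ Ideal.span {f'}) = m) := by
  intro Fq f' S
  have hσa : ∀ i, σ (a i) = a i := fun i => ha i
  have hm0 : 0 < m := by omega
  have hm1 : 1 < m := by omega
  -- facts about f'
  have hdegsum : (∑ i : Fin m, Polynomial.C (⟨a i, ha i⟩ : Fq)
      * Polynomial.X ^ (i : ℕ)).degree < ((m : ℕ) : WithBot ℕ) := by
    refine lt_of_le_of_lt (Polynomial.degree_sum_le _ _) ?_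
    rw [Finset.sup_lt_iff (by exact_mod_cast WithBot.bot_lt_coe m)]
    intro i _
    refine lt_of_le_of_lt (Polynomial.degree_C_mul_X_pow_le _ _) ?_
    exact_mod_cast i.isLt
  have hmonic : f'.Monic := Polynomial.monic_X_pow_sub hdegsum
  have hdeg : f'.degree = (m : ℕ) := by
    show (Polynomial.X ^ m - ∑ i : Fin m, Polynomial.C (⟨a i, ha i⟩ : Fq)
      * Polynomial.X ^ (i : ℕ)).degree = _
    rw [Polynomial.degree_sub_eq_left_of_degree_lt, Polynomial.degree_X_pow]
    rw [Polynomial.degree_X_pow]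
    exact hdegsum
  have hf0 : f' ≠ 0 := hmonic.ne_zero
  have hnatdeg : f'.natDegree = m := Polynomial.natDegree_eq_of_degree_eq_some hdeg
  -- psi kills f'
  have hredm : tred ⇑σ m a m = ∑ i : Fin m, a i • tred ⇑σ m a (i : ℕ) := by
    rw [tred_ge σ m a (lt_irrefl m)]
    simp
  have hpsif : psi σ m a f' = 0 := by
    show psi σ m a (Polynomial.X ^ m -
      ∑ i : Fin m, Polynomial.C (⟨a i, ha i⟩ : Fq) * Polynomial.X ^ (i : ℕ)) = 0
    have h4 : (∑ i : Fin m, psi σ m a (Polynomial.C (⟨a i, ha i⟩ : Fq)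
        * Polynomial.X ^ (i : ℕ))) = ∑ i : Fin m, a i • tred ⇑σ m a (i : ℕ) := by
      refine Finset.sum_congr rfl fun i _ => ?_
      rw [Polynomial.C_mul_X_pow_eq_monomial, psi_monomial]
    rw [psi_sub, psi_X_pow, psi_sum, hredm, h4, sub_self]
  have hker : ∀ p : Polynomial Fq, f' ∣ p → psi σ m a p = 0 := by
    rintro p ⟨g, rfl⟩
    rw [psi_mul σ m a hσa, hpsif, pmul_zero_left]
  have hinj0 : ∀ p : Polynomial Fq, p.degree < ((m : ℕ) : WithBot ℕ) → psi σ m a p = 0 → p = 0 := by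
    intro p hdegp hp0
    by_cases hp : p = 0
    · exact hp
    have hsupp : ∀ s ∈ p.support, s < m := by
      intro s hs
      have h1 := Polynomial.le_natDegree_of_mem_supp s hs
      have h2 : p.natDegree < m := (Polynomial.natDegree_lt_iff_degree_lt hp).mpr hdegp
      omega
    have hco : ∀ k : Fin m, (p.coeff (k : ℕ) : K) = 0 := fun k => by
      rw [← psi_apply_eq σ m a p hsupp k, hp0]; rfl
    ext n
    by_cases hn : n < m
    · have h3 := hco ⟨n, hn⟩
      have h4 : p.coeff n = 0 := by exact_mod_cast h3
      simp [h4]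
    · have h5 : p.degree < (n : ℕ) :=
        lt_of_lt_of_le hdegp (by exact_mod_cast (by omega : m ≤ n))
      simp [Polynomial.coeff_eq_zero_of_degree_lt h5]
  -- the compatible lift
  have hcompat : ∀ p q : Polynomial Fq, Submodule.quotientRel (Ideal.span {f'}) p q →
      psi σ m a p = psi σ m a q := by
    intro p q h
    have h1 : p - q ∈ Ideal.span {f'} := (Submodule.quotientRel_def _).mp h
    have h2 : f' ∣ (p - q) := (Ideal.mem_span_singleton).mp h1
    have h3 := hker _ h2
    rw [psi_sub] at h3
    exact sub_eq_zero.mp h3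
  have hφex : ∃ φ : (Polynomial Fq ⧸ Ideal.span {f'}) → (Fin m → K),
      Function.Injective φ ∧ Set.range φ = S ∧ φ 1 = pone K m ∧
      (∀ p q, φ (p + q) = φ p + φ q) ∧
      (∀ p q, φ (p * q) = pmul (⇑σ) a (φ p) (φ q)) := by
    refine ⟨fun q => Quotient.liftOn q (psi σ m a) hcompat, ?_, ?_, ?_, ?_, ?_⟩
    · -- injective
      intro q1 q2 h
      obtain ⟨p1, rfl⟩ := Ideal.Quotient.mk_surjective q1
      obtain ⟨p2, rfl⟩ := Ideal.Quotient.mk_surjective q2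
      have h' : psi σ m a p1 = psi σ m a p2 := h
      have hpsi12 : psi σ m a (p1 - p2) = 0 := by rw [psi_sub, h', sub_self]
      have hmod : psi σ m a ((p1 - p2) %ₘ f') = 0 := by
        have hdiv : (p1 - p2) %ₘ f' = (p1 - p2) - f' * ((p1 - p2) /ₘ f') := by
          rw [eq_sub_iff_add_eq]
          exact Polynomial.modByMonic_add_div (p1 - p2) f'
        rw [hdiv, psi_sub, hpsi12, hker _ (dvd_mul_right f' _), sub_self]
      have hdegmod : ((p1 - p2) %ₘ f').degree < ((m : ℕ) : WithBot ℕ) := by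
        rw [← hdeg]; exact Polynomial.degree_modByMonic_lt _ hmonic
      have hzero : (p1 - p2) %ₘ f' = 0 := hinj0 _ hdegmod hmod
      have hdvd : f' ∣ (p1 - p2) := (Polynomial.modByMonic_eq_zero_iff_dvd hmonic).mp hzero
      rw [Ideal.Quotient.eq]
      exact Ideal.mem_span_singleton.mpr hdvd
    · -- range = S
      apply Set.eq_of_subset_of_subset
      · rintro x ⟨q, rfl⟩
        obtain ⟨p, rfl⟩ := Ideal.Quotient.mk_surjective q
        exact psi_fix σ m a hσa p
      · intro x hx
        refine ⟨Ideal.Quotient.mk _ (∑ k : Fin m,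
          Polynomial.monomial (k : ℕ) (⟨x k, hx k⟩ : Fq)), ?_⟩
        show psi σ m a _ = x
        rw [psi_sum]
        rw [Finset.sum_congr rfl fun k (_ : k ∈ Finset.univ) => psi_monomial σ m a _ _]
        exact (pdecomp σ m a x).symm
    · -- one
      have h1 : (1 : Polynomial Fq ⧸ Ideal.span {f'}) = Ideal.Quotient.mk _ 1 := rfl
      rw [h1]
      show psi σ m a 1 = pone K m
      rw [← Polynomial.monomial_zero_one, psi_monomial, pone_eq σ m a hm0]
      simp
    · -- add
      intro P Q
      obtain ⟨p, rfl⟩ := Ideal.Quotient.mk_surjective P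
      obtain ⟨q, rfl⟩ := Ideal.Quotient.mk_surjective Q
      rw [← map_add]
      exact psi_add σ m a p q
    · -- mul
      intro P Q
      obtain ⟨p, rfl⟩ := Ideal.Quotient.mk_surjective P
      obtain ⟨q, rfl⟩ := Ideal.Quotient.mk_surjective Q
      rw [← map_mul]
      exact psi_mul σ m a hσa p q
  have htvfix : ∀ l, σ (tvec K m l) = tvec K m l := by
    intro l
    unfold tvec
    split <;> simp
  refine ⟨?_, ?_, ?_, ?_, ?_, hφex, ?_, ?_, ?_, ?_, ?_⟩
  · -- pone ∈ S
    intro i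
    unfold pone
    split <;> simp
  · intro x hx y hy i
    rw [Pi.add_apply, map_add, hx i, hy i]
  · intro x hx i
    rw [Pi.neg_apply, map_neg, hx i]
  · intro x hx y hy
    exact pmul_fix σ m a hσa x y hx hy
  · intro x hx y hy
    exact pcomm σ m a x y hx hy
  · intro z hz x y
    exact passoc σ m a hσa x y z hz
  · intro x y
    exact passoc σ m a hσa x y (tvec K m) htvfix
  · intro i j
    rw [tpow_eq σ m a hm hσa, tpow_eq σ m a hm hσa, tpow_eq σ m a hm hσa,
      pmul_tred σ m a hσa]
  · rw [tpow_eq σ m a hm hσa, tvec_eq σ m a hm1, pmul_tred σ m a hσa,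
      pmul_tred σ m a hσa, Nat.add_comm]
  · intro hirr
    obtain ⟨φ, hinj, hrange, hone, hadd, hmul⟩ := hφex
    have hφ0 : φ 0 = 0 := by
      have h00 := hadd 0 0
      rw [add_zero] at h00
      exact (left_eq_add.mp h00)
    constructor
    · intro z hz hz0
      have hzr : z ∈ Set.range φ := by rw [hrange]; exact hz
      obtain ⟨Q, hQ⟩ := hzr
      obtain ⟨p, rfl⟩ := Ideal.Quotient.mk_surjective Q
      have hndvd : ¬ f' ∣ p := by
        intro hdvd
        apply hz0
        rw [← hQ]
        have : Ideal.Quotient.mk (Ideal.span {f'}) p = 0 :=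
          Ideal.Quotient.eq_zero_iff_mem.mpr (Ideal.mem_span_singleton.mpr hdvd)
        rw [this, hφ0]
      obtain ⟨u, v, huv⟩ := (hirr.coprime_iff_not_dvd).mpr hndvd
      have hmk1 : Ideal.Quotient.mk (Ideal.span {f'}) (p * v) = 1 := by
        rw [← map_one (Ideal.Quotient.mk (Ideal.span {f'})), Ideal.Quotient.eq]
        refine Ideal.mem_span_singleton.mpr ⟨-u, by linear_combination huv⟩
      refine ⟨φ (Ideal.Quotient.mk _ v), ?_, ?_, ?_⟩
      · rw [← hrange]; exact Set.mem_range_self _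
      · rw [← hQ, ← hmul, ← map_mul, hmk1, hone]
      · rw [← hQ, ← hmul, ← map_mul, show v * p = p * v from mul_comm v p, hmk1, hone]
    · -- finrank
      have hfr := PowerBasis.finrank (AdjoinRoot.powerBasis hf0)
      rw [AdjoinRoot.powerBasis_dim, hnatdeg] at hfr
      exact hfr
end

section
/- Suppose σ has finite order n with n < m−1, σ commutes with every τ ∈ Aut_F(K), and f(t) = t^m − Σ_{i=0}^{m−1} a_i t^i ∈ K[t;σ] is monic of degree m and not invariant. Then for every τ ∈ Aut_F(K) and k ∈ K^× satisfying τ(a_i) = (∏_{l=i}^{m−1} σ^l(k))·a_i for all i ∈ {0,…,m−1}, the map H_{τ,k} is an F-algebra automorphism of S_f; these maps form a subgroup of Aut_F(S_f), with composition H_{τ,k} ∘ H_{ρ,b} = H_{τρ, τ(b)k} and inverse H_{τ,k}^{−1} = H_{τ^{−1}, τ^{−1}(k^{−1})}. -/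
open Finset Function

section Twist

variable {K : Type*} [Field K] (σ : K ≃+* K)

noncomputable def twistNorm (k : K) (s : ℕ) : K :=
  ∏ l ∈ range s, (⇑σ)^[l] k

lemma iterate_prod_iterate (i : ℕ) (S : Finset ℕ) (k : K) :
    (⇑σ)^[i] (∏ l ∈ S, (⇑σ)^[l] k) = ∏ l ∈ S, (⇑σ)^[i + l] k := by
  simp only [← RingAut.coe_pow, map_prod, pow_add, RingAut.mul_apply]

lemma twistNorm_add (k : K) (i j : ℕ) :
    twistNorm σ k (i + j) = twistNorm σ k i * (⇑σ)^[i] (twistNorm σ k j) := by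
  rw [twistNorm, twistNorm, twistNorm, prod_range_add, iterate_prod_iterate]

lemma twistNorm_mul (x y : K) (s : ℕ) :
    twistNorm σ (x * y) s = twistNorm σ x s * twistNorm σ y s := by
  simp only [twistNorm, iterate_map_mul, prod_mul_distrib]

lemma twistNorm_one (s : ℕ) : twistNorm σ (1 : K) s = 1 := by
  simp [twistNorm]

lemma map_prod_iterate {F : Type*} [FunLike F K K] [RingHomClass F K K] {τ : F}
    (hc : Function.Commute ⇑σ ⇑τ) (S : Finset ℕ) (k : K) :
    τ (∏ l ∈ S, (⇑σ)^[l] k) = ∏ l ∈ S, (⇑σ)^[l] (τ k) := by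
  simp only [map_prod, (hc.iterate_left _).eq]

lemma map_twistNorm {F : Type*} [FunLike F K K] [RingHomClass F K K] {τ : F}
    (hc : Function.Commute ⇑σ ⇑τ) (k : K) (s : ℕ) :
    τ (twistNorm σ k s) = twistNorm σ (τ k) s :=
  map_prod_iterate σ hc (range s) k

lemma prod_iterate_ne_zero (S : Finset ℕ) {k : K} (hk : k ≠ 0) :
    ∏ l ∈ S, (⇑σ)^[l] k ≠ 0 := by
  simp [← RingAut.coe_pow, prod_ne_zero_iff, hk]

lemma prod_iterate_inv (S : Finset ℕ) (k : K) :
    ∏ l ∈ S, (⇑σ)^[l] k⁻¹ = (∏ l ∈ S, (⇑σ)^[l] k)⁻¹ := by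
  simp [← RingAut.coe_pow, prod_inv_distrib]

lemma prod_Ico_mul_twistNorm (k : K) {i m : ℕ} (hi : i ≤ m) :
    (∏ l ∈ Ico i m, (⇑σ)^[l] k) * twistNorm σ k i = twistNorm σ k m := by
  rw [twistNorm, twistNorm, mul_comm, prod_range_mul_prod_Ico _ hi]

lemma iterate_prod_Ico_mul_twistNorm (k : K) {i m : ℕ} (hi : i ≤ m) (d : ℕ) :
    (⇑σ)^[d] (∏ l ∈ Ico i m, (⇑σ)^[l] k) * twistNorm σ k (d + i) = twistNorm σ k (d + m) := by
  rw [twistNorm_add, twistNorm_add, mul_left_comm, ← iterate_map_mul,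
    prod_Ico_mul_twistNorm σ k hi]

end Twist

section HmapLemmas

variable {K : Type*} [Field K] {m : ℕ}

lemma Hmap_apply (σ : K ≃+* K) (τ : K → K) (k : K) (x : Fin m → K) (i : Fin m) :
    Hmap ⇑σ τ k x i = τ (x i) * twistNorm σ k i := rfl

lemma Hmap_add (σ : K → K) (τ : K ≃+* K) (k : K) (x y : Fin m → K) :
    Hmap σ ⇑τ k (x + y) = Hmap σ ⇑τ k x + Hmap σ ⇑τ k y := by
  funext i
  simp [Hmap, add_mul]

lemma Hmap_smul (σ : K → K) (τ : K ≃+* K) (k c : K) (x : Fin m → K) :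
    Hmap σ ⇑τ k (c • x) = τ c • Hmap σ ⇑τ k x := by
  funext i
  simp [Hmap, mul_assoc]

lemma Hmap_sum {ι : Type*} (σ : K → K) (τ : K ≃+* K) (k : K) (S : Finset ι)
    (x : ι → Fin m → K) :
    Hmap σ ⇑τ k (∑ j ∈ S, x j) = ∑ j ∈ S, Hmap σ ⇑τ k (x j) := by
  funext i
  simp [Hmap, sum_mul]

lemma Hmap_pone (σ : K → K) (τ : K ≃+* K) (k : K) : Hmap σ ⇑τ k (pone K m) = pone K m := by
  funext i
  by_cases hi : (i : ℕ) = 0 <;> simp [Hmap, pone, hi]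

lemma Hmap_tred (σ : K ≃+* K) {τ : K ≃+* K} (hc : Function.Commute ⇑σ ⇑τ) {a : Fin m → K}
    {k : K} (hka : ∀ i : Fin m, τ (a i) = (∏ l ∈ Ico (i : ℕ) m, (⇑σ)^[l] k) * a i) (s : ℕ) :
    Hmap ⇑σ ⇑τ k (tred ⇑σ m a s) = twistNorm σ k s • tred ⇑σ m a s := by
  induction s using Nat.strong_induction_on with
  | _ s ih =>
    rw [tred.eq_def]
    split_ifs with hs
    · funext p
      by_cases hp : (p : ℕ) = s <;> simp [Hmap_apply, hp]
    · rw [Hmap_sum, smul_sum]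
      refine sum_congr rfl fun i _ => ?_
      rw [Hmap_smul, ih _ (by omega), smul_smul, smul_smul, ← (hc.iterate_left _).eq, hka,
        iterate_map_mul, mul_right_comm, iterate_prod_Ico_mul_twistNorm σ k i.is_lt.le,
        Nat.sub_add_cancel (not_lt.mp hs), mul_comm]

end HmapLemmas

section Automorphism

variable {K : Type*} [Field K] {m : ℕ} (σ : K ≃+* K) {τ : K ≃+* K}

lemma Hmap_pmul (hc : Function.Commute ⇑σ ⇑τ) {a : Fin m → K} {k : K}
    (hka : ∀ i : Fin m, τ (a i) = (∏ l ∈ Ico (i : ℕ) m, (⇑σ)^[l] k) * a i) (x y : Fin m → K) :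
    Hmap ⇑σ ⇑τ k (pmul ⇑σ a x y) = pmul ⇑σ a (Hmap ⇑σ ⇑τ k x) (Hmap ⇑σ ⇑τ k y) := by
  simp only [pmul, Hmap_sum, Hmap_smul, Hmap_tred σ hc hka, smul_smul]
  refine sum_congr rfl fun i _ => sum_congr rfl fun j _ => ?_
  rw [Hmap_apply, Hmap_apply, map_mul, twistNorm_add, iterate_map_mul,
    ← (hc.iterate_left _).eq]
  congr 1
  ring

lemma Hmap_comp (hc : Function.Commute ⇑σ ⇑τ) (ρ : K → K) (k b : K) :
    (Hmap ⇑σ ⇑τ k : (Fin m → K) → Fin m → K) ∘ Hmap ⇑σ ρ b = Hmap ⇑σ (⇑τ ∘ ρ) (τ b * k) := by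
  funext x i
  simp only [comp_apply, Hmap_apply, map_mul, map_twistNorm σ hc, twistNorm_mul]
  ring

lemma Hmap_id_one : (Hmap ⇑σ id (1 : K) : (Fin m → K) → Fin m → K) = id := by
  funext x i
  simp [Hmap_apply, twistNorm_one]

lemma Hmap_comp_Hmap_symm (hc : Function.Commute ⇑σ ⇑τ) {k : K} (hk : k ≠ 0) :
    (Hmap ⇑σ ⇑τ k : (Fin m → K) → Fin m → K) ∘ Hmap ⇑σ ⇑τ.symm (τ.symm k⁻¹) = id := by
  rw [Hmap_comp σ hc, show ⇑τ ∘ ⇑τ.symm = id from funext τ.apply_symm_apply,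
    τ.apply_symm_apply, inv_mul_cancel₀ hk, Hmap_id_one]

lemma commute_symm_of_commute (hc : Function.Commute ⇑σ ⇑τ) : Function.Commute ⇑σ ⇑τ.symm :=
  hc.inverses_right τ.apply_symm_apply τ.symm_apply_apply

lemma Hmap_symm_comp_Hmap (hc : Function.Commute ⇑σ ⇑τ) {k : K} (hk : k ≠ 0) :
    (Hmap ⇑σ ⇑τ.symm (τ.symm k⁻¹) : (Fin m → K) → Fin m → K) ∘ Hmap ⇑σ ⇑τ k = id := by
  rw [Hmap_comp σ (commute_symm_of_commute σ hc),
    show ⇑τ.symm ∘ ⇑τ = id from funext τ.symm_apply_apply,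
    ← map_mul, mul_inv_cancel₀ hk, map_one, Hmap_id_one]

theorem isPetitAut_Hmap (hc : Function.Commute ⇑σ ⇑τ) (hF : ∀ c : K, σ c = c → τ c = c)
    {a : Fin m → K} {k : K} (hk : k ≠ 0)
    (hka : ∀ i : Fin m, τ (a i) = (∏ l ∈ Ico (i : ℕ) m, (⇑σ)^[l] k) * a i) :
    IsPetitAut ⇑σ a (Hmap ⇑σ ⇑τ k) where
  bijective := bijective_iff_has_inverse.mpr
    ⟨_, congrFun (Hmap_symm_comp_Hmap σ hc hk), congrFun (Hmap_comp_Hmap_symm σ hc hk)⟩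
  map_add := Hmap_add ⇑σ τ k
  map_smul c hc' x := by rw [Hmap_smul, hF c hc']
  map_mul := Hmap_pmul σ hc hka
  map_one := Hmap_pone ⇑σ τ k

lemma symm_apply_eq_self_of_fixed (hc : Function.Commute ⇑σ ⇑τ)
    (hF : ∀ c : K, σ c = c → τ c = c)
    {c : K} (h : σ c = c) : τ.symm c = c := by
  have hfix : σ (τ.symm c) = τ.symm c := by rw [commute_symm_of_commute σ hc c, h]
  simpa using (hF _ hfix).symm

lemma symm_apply_eq_prod_iterate_mul (hc : Function.Commute ⇑σ ⇑τ) {k : K} (hk : k ≠ 0)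
    (S : Finset ℕ) {x : K} (hx : τ x = (∏ l ∈ S, (⇑σ)^[l] k) * x) :
    τ.symm x = (∏ l ∈ S, (⇑σ)^[l] (τ.symm k⁻¹)) * x := by
  apply τ.injective
  rw [τ.apply_symm_apply, map_mul, hx, map_prod_iterate σ hc, τ.apply_symm_apply,
    prod_iterate_inv, inv_mul_cancel_left₀ (prod_iterate_ne_zero σ S hk)]

end Automorphism

theorem stmt4_general {K : Type*} [Field K] (σ : K ≃+* K)
    (m : ℕ) (a : Fin m → K)
    (hcomm : ∀ τ : K ≃+* K, (∀ c : K, σ c = c → τ c = c) → ∀ x, σ (τ x) = τ (σ x)) :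
    (∀ τ : K ≃+* K, (∀ c : K, σ c = c → τ c = c) →
      ∀ k : K, k ≠ 0 →
        (∀ i : Fin m, τ (a i) = (∏ l ∈ Finset.Ico (i : ℕ) m, (⇑σ)^[l] k) * a i) →
        IsPetitAut (⇑σ) a (Hmap (⇑σ) (⇑τ) k))
    ∧ (∀ τ ρ : K ≃+* K, (∀ c : K, σ c = c → τ c = c) → (∀ c : K, σ c = c → ρ c = c) →
        ∀ k b : K, k ≠ 0 → b ≠ 0 →
        (∀ i : Fin m, τ (a i) = (∏ l ∈ Finset.Ico (i : ℕ) m, (⇑σ)^[l] k) * a i) →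
        (∀ i : Fin m, ρ (a i) = (∏ l ∈ Finset.Ico (i : ℕ) m, (⇑σ)^[l] b) * a i) →
        (Hmap (⇑σ) (⇑τ) k : (Fin m → K) → Fin m → K) ∘ Hmap (⇑σ) (⇑ρ) b
          = Hmap (⇑σ) (⇑(ρ.trans τ)) (τ b * k))
    ∧ (∀ τ : K ≃+* K, (∀ c : K, σ c = c → τ c = c) →
        ∀ k : K, k ≠ 0 →
        (∀ i : Fin m, τ (a i) = (∏ l ∈ Finset.Ico (i : ℕ) m, (⇑σ)^[l] k) * a i) →
        (∀ c : K, σ c = c → τ.symm c = c) ∧ (τ.symm k⁻¹ ≠ 0) ∧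
        (∀ i : Fin m, τ.symm (a i)
            = (∏ l ∈ Finset.Ico (i : ℕ) m, (⇑σ)^[l] (τ.symm k⁻¹)) * a i) ∧
        (Hmap (⇑σ) (⇑τ) k : (Fin m → K) → Fin m → K) ∘ Hmap (⇑σ) (⇑τ.symm) (τ.symm k⁻¹)
          = id ∧
        (Hmap (⇑σ) (⇑τ.symm) (τ.symm k⁻¹) : (Fin m → K) → Fin m → K) ∘ Hmap (⇑σ) (⇑τ) k
          = id) := by
  refine ⟨fun τ hF k hk hka => isPetitAut_Hmap σ (hcomm τ hF) hF hk hka, ?_, ?_⟩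
  · intro τ ρ hF _ k b _ _ _ _
    rw [Hmap_comp σ (hcomm τ hF), RingEquiv.coe_trans]
  · intro τ hF k hk hka
    have hc := hcomm τ hF
    exact ⟨fun _ => symm_apply_eq_self_of_fixed σ hc hF, by simpa using hk,
      fun i => symm_apply_eq_prod_iterate_mul σ hc hk _ (hka i),
      Hmap_comp_Hmap_symm σ hc hk, Hmap_symm_comp_Hmap σ hc hk⟩

/-- **Theorem 2.3 (i).** Let `σ` have finite order `n < m − 1` and commute with every
`τ ∈ Aut_F(K)`, and let `f(t) = t^m − Σ_{i<m} a_i t^i` be not invariant (equivalently,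
`S_f` not associative).  For every `τ ∈ Aut_F(K)` and `k ∈ K^×` with
`τ(a_i) = (Π_{l=i}^{m−1} σ^l(k))·a_i` for all `i`, the map `H_{τ,k}` is an `F`-algebra
automorphism of `S_f`; these maps form a subgroup of `Aut_F(S_f)`, with
`H_{τ,k} ∘ H_{ρ,b} = H_{τρ, τ(b)k}` and inverse `H_{τ⁻¹, τ⁻¹(k⁻¹)}`. -/
theorem stmt4 {K : Type*} [Field K] (σ : K ≃+* K) (hσ : σ ≠ RingEquiv.refl K)
    (m n : ℕ) (hm : 2 ≤ m) (a : Fin m → K)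
    (hn0 : 0 < n) (hord : (⇑σ)^[n] = id)
    (hmin : ∀ j : ℕ, 0 < j → j < n → (⇑σ)^[j] ≠ id)
    (hnm : n < m - 1)
    (hcomm : ∀ τ : K ≃+* K, (∀ c : K, σ c = c → τ c = c) → ∀ x, σ (τ x) = τ (σ x))
    (hna : ¬ PAssoc (⇑σ) a) :
    (∀ τ : K ≃+* K, (∀ c : K, σ c = c → τ c = c) →
      ∀ k : K, k ≠ 0 →
        (∀ i : Fin m, τ (a i) = (∏ l ∈ Finset.Ico (i : ℕ) m, (⇑σ)^[l] k) * a i) →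
        IsPetitAut (⇑σ) a (Hmap (⇑σ) (⇑τ) k))
    ∧ (∀ τ ρ : K ≃+* K, (∀ c : K, σ c = c → τ c = c) → (∀ c : K, σ c = c → ρ c = c) →
        ∀ k b : K, k ≠ 0 → b ≠ 0 →
        (∀ i : Fin m, τ (a i) = (∏ l ∈ Finset.Ico (i : ℕ) m, (⇑σ)^[l] k) * a i) →
        (∀ i : Fin m, ρ (a i) = (∏ l ∈ Finset.Ico (i : ℕ) m, (⇑σ)^[l] b) * a i) →
        (Hmap (⇑σ) (⇑τ) k : (Fin m → K) → Fin m → K) ∘ Hmap (⇑σ) (⇑ρ) b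
          = Hmap (⇑σ) (⇑(ρ.trans τ)) (τ b * k))
    ∧ (∀ τ : K ≃+* K, (∀ c : K, σ c = c → τ c = c) →
        ∀ k : K, k ≠ 0 →
        (∀ i : Fin m, τ (a i) = (∏ l ∈ Finset.Ico (i : ℕ) m, (⇑σ)^[l] k) * a i) →
        (∀ c : K, σ c = c → τ.symm c = c) ∧ (τ.symm k⁻¹ ≠ 0) ∧
        (∀ i : Fin m, τ.symm (a i)
            = (∏ l ∈ Finset.Ico (i : ℕ) m, (⇑σ)^[l] (τ.symm k⁻¹)) * a i) ∧
        (Hmap (⇑σ) (⇑τ) k : (Fin m → K) → Fin m → K) ∘ Hmap (⇑σ) (⇑τ.symm) (τ.symm k⁻¹)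
          = id ∧
        (Hmap (⇑σ) (⇑τ.symm) (τ.symm k⁻¹) : (Fin m → K) → Fin m → K) ∘ Hmap (⇑σ) (⇑τ) k
          = id) :=
  stmt4_general σ m a hcomm
end

section
/- Suppose σ has finite order n with n < m−1, σ commutes with every τ ∈ Aut_F(K), and f(t) = t^m − Σ_{i=0}^{m−1} a_i t^i ∈ K[t;σ] is monic of degree m and not invariant. Then every F-algebra automorphism H of S_f restricts on K = Nuc_l(S_f) to some τ ∈ Aut_F(K), restricts to an F-automorphism of Nuc_r(S_f), and satisfies H(t) = k_1 t + k_{1+n} t^{1+n} + k_{1+2n} t^{1+2n} + ··· + k_{1+sn} t^{1+sn} for some coefficients k_{1+ln} ∈ K (with 1+sn ≤ m−1); that is, the only exponents occurring in H(t) are congruent to 1 modulo n. -/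
/-- The right nucleus `Nuc_r(S_f) = {z | [S_f, S_f, z] = 0}`. -/
def NucrP {K : Type*} [Field K] (σ : K → K) {m : ℕ} (a : Fin m → K) : Set (Fin m → K) :=
  {z | ∀ x y : Fin m → K, pmul σ a (pmul σ a x y) z = pmul σ a x (pmul σ a y z)}

namespace S5
variable {K : Type*} [Field K] (σ : K ≃+* K)

/-- iterated σ lemmas -/
lemma sig_add (p : ℕ) (x y : K) : (⇑σ)^[p] (x + y) = (⇑σ)^[p] x + (⇑σ)^[p] y := by
  induction p generalizing x y with
  | zero => simp
  | succ k ih => simp [Function.iterate_succ_apply, map_add, ih]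

lemma sig_mul (p : ℕ) (x y : K) : (⇑σ)^[p] (x * y) = (⇑σ)^[p] x * (⇑σ)^[p] y := by
  induction p generalizing x y with
  | zero => simp
  | succ k ih => simp [Function.iterate_succ_apply, map_mul, ih]

lemma sig_zero (p : ℕ) : (⇑σ)^[p] (0 : K) = 0 := by
  induction p with
  | zero => simp
  | succ k ih => simp [Function.iterate_succ_apply, ih]

lemma sig_one (p : ℕ) : (⇑σ)^[p] (1 : K) = 1 := by
  induction p with
  | zero => simp
  | succ k ih => simp [Function.iterate_succ_apply, ih]

lemma sig_neg (p : ℕ) (x : K) : (⇑σ)^[p] (-x) = -(⇑σ)^[p] x := by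
  induction p generalizing x with
  | zero => simp
  | succ k ih => simp [Function.iterate_succ_apply, ih]

lemma sig_sum (p : ℕ) {ι : Type*} (t : Finset ι) (g : ι → K) :
    (⇑σ)^[p] (∑ i ∈ t, g i) = ∑ i ∈ t, (⇑σ)^[p] (g i) := by
  classical
  induction t using Finset.induction with
  | empty => simp [sig_zero]
  | insert _ _ h ih => simp [Finset.sum_insert h, sig_add, ih]

/-- singles -/
noncomputable def sk (i : ℕ) (c : K) : ℕ → K := fun s => if s = i then c else 0

/-- skew polynomial multiplication on `ℕ → K` -/
noncomputable def mulP (u v : ℕ → K) : ℕ → K :=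
  fun s => ∑ p ∈ Finset.range (s + 1), u p * (⇑σ)^[p] (v (s - p))

lemma sk_smul (i : ℕ) (c : K) : sk i c = c • sk (K := K) i 1 := by
  funext s; by_cases h : s = i <;> simp [sk, h]

lemma mulP_sk_left (i : ℕ) (c : K) (v : ℕ → K) :
    mulP σ (sk i c) v = fun s => if i ≤ s then c * (⇑σ)^[i] (v (s - i)) else 0 := by
  funext s
  by_cases h : i ≤ s
  · rw [mulP, Finset.sum_eq_single i]
    · simp [sk, if_pos h]
    · intro p _ hp; simp [sk, hp]
    · intro hs; exfalso; exact hs (Finset.mem_range.mpr (by omega))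
  · rw [mulP, Finset.sum_eq_zero, if_neg h]
    intro p hp
    have : p ≠ i := by simp at hp; omega
    simp [sk, this]

lemma mulP_sk_right (j : ℕ) (d : K) (u : ℕ → K) :
    mulP σ u (sk j d) = fun s => if j ≤ s then u (s - j) * (⇑σ)^[s - j] d else 0 := by
  funext s
  by_cases h : j ≤ s
  · rw [mulP, Finset.sum_eq_single (s - j)]
    · simp [sk, Nat.sub_sub_self h, h]
    · intro p hp hp'
      have hps : p ≤ s := by simp at hp; omega
      have : s - p ≠ j := by omega
      simp [sk, this, sig_zero]
    · intro hs; exfalso; exact hs (Finset.mem_range.mpr (by omega))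
  · rw [mulP, Finset.sum_eq_zero, if_neg h]
    intro p hp
    have hps : p ≤ s := by simp at hp; omega
    have : s - p ≠ j := by omega
    simp [sk, this, sig_zero]

lemma mulP_sk_sk (i j : ℕ) (c d : K) :
    mulP σ (sk i c) (sk j d) = sk (i + j) (c * (⇑σ)^[i] d) := by
  rw [mulP_sk_left]
  funext s
  simp only [sk]
  by_cases h : i ≤ s
  · rw [if_pos h]
    by_cases h2 : s - i = j
    · rw [if_pos h2, if_pos (by omega)]
    · rw [if_neg h2, if_neg (by omega), sig_zero, mul_zero]
  · rw [if_neg h, if_neg (by omega)]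

lemma mulP_sk0 (c : K) (v : ℕ → K) : mulP σ (sk 0 c) v = c • v := by
  rw [mulP_sk_left]; funext s; simp

lemma mulP_sk_assoc (i j : ℕ) (c d : K) (w : ℕ → K) :
    mulP σ (mulP σ (sk i c) (sk j d)) w = mulP σ (sk i c) (mulP σ (sk j d) w) := by
  rw [mulP_sk_sk]
  funext s
  simp only [mulP_sk_left]
  by_cases h : i + j ≤ s
  · rw [if_pos h, if_pos (by omega), if_pos (show j ≤ s - i by omega)]
    rw [sig_mul, ← Function.iterate_add_apply, show s - i - j = s - (i + j) by omega,
      mul_assoc]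
  · rw [if_neg h]
    by_cases h2 : i ≤ s
    · rw [if_pos h2, if_neg (show ¬ j ≤ s - i by omega), sig_zero, mul_zero]
    · rw [if_neg h2]

/-- support bound -/
def Bdd (N : ℕ) (u : ℕ → K) : Prop := ∀ s, N ≤ s → u s = 0

lemma bdd_sk (i : ℕ) (c : K) : Bdd (i + 1) (sk i c) := by
  intro s hs; simp [sk]; omega

lemma bdd_mulP {M N : ℕ} {u v : ℕ → K} (hu : Bdd M u) (hv : Bdd N v) :
    Bdd (M + N) (mulP σ u v) := by
  intro s hs
  rw [mulP, Finset.sum_eq_zero]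
  intro p hp
  simp only [Finset.mem_range] at hp
  by_cases h : M ≤ p
  · rw [hu p h, zero_mul]
  · rw [hv (s - p) (by omega), sig_zero, mul_zero]

lemma mulP_add_left (u u' v : ℕ → K) :
    mulP σ (u + u') v = mulP σ u v + mulP σ u' v := by
  funext s
  simp [mulP, add_mul, Finset.sum_add_distrib]

lemma mulP_add_right (u v v' : ℕ → K) :
    mulP σ u (v + v') = mulP σ u v + mulP σ u v' := by
  funext s
  simp [mulP, sig_add, mul_add, Finset.sum_add_distrib]

lemma mulP_zero_left (v : ℕ → K) : mulP σ (0 : ℕ → K) v = 0 := by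
  funext s; simp [mulP]

lemma mulP_sub_left (u u' v : ℕ → K) :
    mulP σ (u - u') v = mulP σ u v - mulP σ u' v := by
  funext s
  simp [mulP, sub_mul, Finset.sum_sub_distrib]

lemma mulP_smul_left (c : K) (u v : ℕ → K) :
    mulP σ (c • u) v = c • mulP σ u v := by
  funext s
  simp [mulP, Finset.mul_sum, mul_assoc]

lemma mulP_sum_left {ι : Type*} (t : Finset ι) (g : ι → ℕ → K) (v : ℕ → K) :
    mulP σ (∑ i ∈ t, g i) v = ∑ i ∈ t, mulP σ (g i) v := by
  classical
  induction t using Finset.induction with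
  | empty => simp [mulP_zero_left]
  | insert _ _ h ih => rw [Finset.sum_insert h, Finset.sum_insert h, mulP_add_left, ih]

lemma mulP_sum_right {ι : Type*} (t : Finset ι) (u : ℕ → K) (g : ι → ℕ → K) :
    mulP σ u (∑ i ∈ t, g i) = ∑ i ∈ t, mulP σ u (g i) := by
  classical
  induction t using Finset.induction with
  | empty =>
    funext s; simp [mulP, sig_zero]
  | insert _ _ h ih => rw [Finset.sum_insert h, Finset.sum_insert h, mulP_add_right, ih]

lemma eq_sum_sk {N : ℕ} {u : ℕ → K} (hu : Bdd N u) :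
    u = ∑ i ∈ Finset.range N, sk i (u i) := by
  funext s
  rw [Finset.sum_apply]
  by_cases h : s < N
  · rw [Finset.sum_eq_single s]
    · simp [sk]
    · intro p _ hp; simp [sk, Ne.symm hp]
    · intro hs; exact absurd (Finset.mem_range.mpr h) hs
  · rw [hu s (by omega), Finset.sum_eq_zero]
    intro p hp
    have : s ≠ p := by simp at hp; omega
    simp [sk, this]

lemma mulP_assoc {M N : ℕ} {u v : ℕ → K} (hu : Bdd M u) (hv : Bdd N v) (w : ℕ → K) :
    mulP σ (mulP σ u v) w = mulP σ u (mulP σ v w) := by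
  rw [eq_sum_sk hu, eq_sum_sk hv]
  simp only [mulP_sum_left, mulP_sum_right, mulP_sk_assoc]

section
variable {m : ℕ} (a : Fin m → K)

/-- embedding of `Fin m → K` into `ℕ → K` -/
noncomputable def emb (x : Fin m → K) : ℕ → K :=
  fun s => if h : s < m then x ⟨s, h⟩ else 0

/-- the polynomial `f` -/
noncomputable def fp : ℕ → K :=
  fun s => if s = m then 1 else if h : s < m then -(a ⟨s, h⟩) else 0

/-- membership in the left ideal `R·f` (with bounded quotient) -/
def IsM (u : ℕ → K) : Prop := ∃ N, ∃ q : ℕ → K, Bdd N q ∧ u = mulP σ q (fp a)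

variable {σ} {a}

lemma bdd_emb (x : Fin m → K) : Bdd m (emb x) := fun s hs => dif_neg (by omega)

lemma bdd_fp : Bdd (m + 1) (fp a) := by
  intro s hs; simp only [fp]; rw [if_neg (by omega), dif_neg (by omega)]

lemma emb_inj {x x' : Fin m → K} (h : emb x = emb x') : x = x' := by
  funext i
  have := congrFun h i.val
  simpa [emb, i.isLt] using this

lemma emb_smul (c : K) (x : Fin m → K) : emb (c • x) = c • emb x := by
  funext s; by_cases h : s < m <;> simp [emb, h]

lemma emb_sum {ι : Type*} (t : Finset ι) (g : ι → Fin m → K) :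
    emb (∑ i ∈ t, g i) = ∑ i ∈ t, emb (g i) := by
  funext s; by_cases h : s < m <;> simp [emb, h]

lemma emb_delta (j : ℕ) (hj : j < m) :
    emb (fun i : Fin m => if (i : ℕ) = j then (1 : K) else 0) = sk j 1 := by
  funext s
  by_cases h : s < m
  · simp only [emb, dif_pos h, sk]
  · simp only [emb, dif_neg h, sk]
    rw [if_neg (by omega)]

lemma emb_eq_sum (x : Fin m → K) : emb x = ∑ i : Fin m, sk (i : ℕ) (x i) := by
  funext s
  rw [Finset.sum_apply]
  by_cases h : s < m
  · rw [Finset.sum_eq_single ⟨s, h⟩]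
    · simp [emb, h, sk]
    · intro i _ hi
      have : s ≠ (i : ℕ) := by
        intro hc; apply hi; apply Fin.ext; simp only [Fin.val_mk]; omega
      simp [sk, this]
    · simp
  · rw [Finset.sum_eq_zero, emb, dif_neg h]
    intro i _
    have : s ≠ (i : ℕ) := by have := i.isLt; omega
    simp [sk, this]

lemma isM_zero : IsM σ a (0 : ℕ → K) :=
  ⟨0, 0, fun _ _ => rfl, (mulP_zero_left σ _).symm⟩

lemma bdd_mono {N N' : ℕ} {u : ℕ → K} (h : N ≤ N') (hu : Bdd N u) : Bdd N' u :=
  fun s hs => hu s (by omega)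

lemma isM_add {u v : ℕ → K} (hu : IsM σ a u) (hv : IsM σ a v) : IsM σ a (u + v) := by
  obtain ⟨N, q, hq, rfl⟩ := hu
  obtain ⟨N', q', hq', rfl⟩ := hv
  refine ⟨max N N', q + q', ?_, (mulP_add_left σ _ _ _).symm⟩
  intro s hs
  rw [Pi.add_apply, hq s (by omega), hq' s (by omega), add_zero]

lemma isM_smul (c : K) {u : ℕ → K} (hu : IsM σ a u) : IsM σ a (c • u) := by
  obtain ⟨N, q, hq, rfl⟩ := hu
  refine ⟨N, c • q, ?_, (mulP_smul_left σ _ _ _).symm⟩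
  intro s hs
  rw [Pi.smul_apply, hq s hs, smul_zero]

lemma isM_sum {ι : Type*} (t : Finset ι) (g : ι → ℕ → K)
    (h : ∀ i ∈ t, IsM σ a (g i)) : IsM σ a (∑ i ∈ t, g i) := by
  classical
  induction t using Finset.induction with
  | empty => simpa using isM_zero
  | insert _ _ hne ih =>
    rename_i i t
    rw [Finset.sum_insert hne]
    exact isM_add (h i (Finset.mem_insert_self i t))
      (ih fun j hj => h j (Finset.mem_insert_of_mem hj))

lemma isM_mull {N : ℕ} {w u : ℕ → K} (hw : Bdd N w) (hu : IsM σ a u) :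
    IsM σ a (mulP σ w u) := by
  obtain ⟨N', q, hq, rfl⟩ := hu
  exact ⟨N + N', mulP σ w q, bdd_mulP σ hw hq, (mulP_assoc σ hw hq _).symm⟩

lemma isM_sub {u v : ℕ → K} (hu : IsM σ a u) (hv : IsM σ a v) : IsM σ a (u - v) := by
  have := isM_add hu (isM_smul (-1 : K) hv)
  simpa [sub_eq_add_neg] using this

/-- the key division computation: `t^{s-m}·f = t^s - Σ_i σ^{s-m}(a_i) t^{s-m+i}` -/
lemma sk_top (s : ℕ) (hs : m ≤ s) :
    mulP σ (sk (s - m) 1) (fp a) =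
      sk s 1 - ∑ i : Fin m, sk (s - m + (i : ℕ)) ((⇑σ)^[s - m] (a i)) := by
  funext s'
  simp only [mulP_sk_left, Pi.sub_apply, Finset.sum_apply]
  by_cases h1 : s - m ≤ s'
  · rw [if_pos h1, one_mul]
    by_cases h2 : s' = s
    · rw [h2, show s - (s - m) = m by omega]
      have hfp : fp a m = 1 := by simp [fp]
      rw [hfp, sig_one, sk, if_pos rfl, Finset.sum_eq_zero, sub_zero]
      intro i _
      have : s ≠ s - m + (i : ℕ) := by have := i.isLt; omega
      simp only [sk, if_neg this]
    · rw [sk, if_neg h2, zero_sub]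
      by_cases h3 : s' < s
      · have he : s' - (s - m) < m := by omega
        have hfp : fp a (s' - (s - m)) = -(a ⟨s' - (s - m), he⟩) := by
          simp only [fp]
          rw [if_neg (by omega), dif_pos he]
        rw [hfp, sig_neg, neg_inj]
        rw [Finset.sum_eq_single ⟨s' - (s - m), he⟩]
        · rw [sk, if_pos (by simp; omega)]
        · intro i _ hi
          have : s' ≠ s - m + (i : ℕ) := by
            intro hc
            exact hi (Fin.ext (by simp; omega))
          simp [sk, this]
        · simp
      · have hfp : fp a (s' - (s - m)) = 0 := by
          simp only [fp]
          rw [if_neg (by omega), dif_neg (by omega)]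
        rw [hfp, sig_zero, Finset.sum_eq_zero, neg_zero]
        intro i _
        have : s' ≠ s - m + (i : ℕ) := by have := i.isLt; omega
        simp [sk, this]
  · rw [if_neg h1, sk, if_neg (by omega), Finset.sum_eq_zero, sub_zero]
    intro i _
    have : s' ≠ s - m + (i : ℕ) := by omega
    simp [sk, this]

/-- T1: `t^s ≡ tred s  (mod R·f)` -/
lemma isM_sk_sub_tred (hm0 : 0 < m) : ∀ s, IsM σ a (sk s 1 - emb (tred (⇑σ) m a s)) := by
  intro s
  induction s using Nat.strong_induction_on with
  | _ s ih =>
  by_cases h : s < m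
  · have : emb (tred (⇑σ) m a s) = sk s 1 := by
      rw [tred, dif_pos h]
      exact emb_delta s h
    rw [this, sub_self]
    exact isM_zero
  · push_neg at h
    rw [tred, dif_neg (by omega), emb_sum]
    have key : sk s 1 - ∑ i : Fin m, emb ((⇑σ)^[s - m] (a i) • tred (⇑σ) m a (s - m + (i : ℕ)))
        = mulP σ (sk (s - m) 1) (fp a)
          + ∑ i : Fin m, (⇑σ)^[s - m] (a i) •
              (sk (s - m + (i : ℕ)) 1 - emb (tred (⇑σ) m a (s - m + (i : ℕ)))) := by
      rw [sk_top s h]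
      have e1 : ∀ i : Fin m, emb ((⇑σ)^[s - m] (a i) • tred (⇑σ) m a (s - m + (i : ℕ)))
          = (⇑σ)^[s - m] (a i) • emb (tred (⇑σ) m a (s - m + (i : ℕ))) := fun i => emb_smul _ _
      simp only [e1, smul_sub, Finset.sum_sub_distrib]
      have e2 : ∀ i : Fin m, (⇑σ)^[s - m] (a i) • sk (s - m + (i : ℕ)) (1 : K)
          = sk (s - m + (i : ℕ)) ((⇑σ)^[s - m] (a i)) := fun i => (sk_smul _ _).symm
      simp only [e2]
      abel
    rw [key]
    refine isM_add ⟨s - m + 1, sk (s - m) 1, bdd_sk _ _, rfl⟩ ?_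
    refine isM_sum _ _ fun i _ => isM_smul _ (ih _ ?_)
    have := i.isLt; omega

/-- T2 -/
lemma isM_mul_sub_pmul (hm0 : 0 < m) (x y : Fin m → K) :
    IsM σ a (mulP σ (emb x) (emb y) - emb (pmul (⇑σ) a x y)) := by
  have e1 : mulP σ (emb x) (emb y)
      = ∑ i : Fin m, ∑ j : Fin m, sk ((i : ℕ) + (j : ℕ)) (x i * (⇑σ)^[(i : ℕ)] (y j)) := by
    rw [emb_eq_sum x, emb_eq_sum y, mulP_sum_left]
    refine Finset.sum_congr rfl fun i _ => ?_
    rw [mulP_sum_right]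
    exact Finset.sum_congr rfl fun j _ => mulP_sk_sk σ _ _ _ _
  have e2 : emb (pmul (⇑σ) a x y)
      = ∑ i : Fin m, ∑ j : Fin m,
          (x i * (⇑σ)^[(i : ℕ)] (y j)) • emb (tred (⇑σ) m a ((i : ℕ) + (j : ℕ))) := by
    rw [pmul, emb_sum]
    refine Finset.sum_congr rfl fun i _ => ?_
    rw [emb_sum]
    exact Finset.sum_congr rfl fun j _ => emb_smul _ _
  rw [e1, e2, ← Finset.sum_sub_distrib]
  refine isM_sum _ _ fun i _ => ?_
  rw [← Finset.sum_sub_distrib]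
  refine isM_sum _ _ fun j _ => ?_
  rw [sk_smul, ← smul_sub]
  exact isM_smul _ (isM_sk_sub_tred hm0 _)

/-- T3: uniqueness of remainders -/
lemma isM_bdd_eq_zero {u : ℕ → K} (hu : IsM σ a u) (hb : Bdd m u) : u = 0 := by
  obtain ⟨N, q, hq, rfl⟩ := hu
  have key : ∀ k d, N ≤ d + k → q d = 0 := by
    intro k
    induction k with
    | zero => intro d hd; exact hq d (by omega)
    | succ k ih =>
      intro d hd
      have hval : mulP σ q (fp a) (d + m) = q d := by
        rw [mulP, Finset.sum_eq_single d]
        · rw [show d + m - d = m by omega]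
          have : fp a m = 1 := by simp [fp]
          rw [this, sig_one, mul_one]
        · intro p hp hpd
          rcases Nat.lt_or_ge p d with h | h
          · have : fp a (d + m - p) = 0 := by
              simp only [fp]
              rw [if_neg (by omega), dif_neg (by omega)]
            rw [this, sig_zero, mul_zero]
          · have : d < p := by omega
            rw [ih p (by omega), zero_mul]
        · intro hd'; exact absurd (Finset.mem_range.mpr (by omega)) hd'
      rw [← hval]
      exact hb (d + m) (by omega)
  have : q = 0 := funext fun d => key N d (by omega)
  rw [this]
  exact mulP_zero_left σ _

lemma emb_eq_of_isM_sub {x x' : Fin m → K} (h : IsM σ a (emb x - emb x')) : x = x' := by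
  have hb : Bdd m (emb x - emb x') := by
    intro s hs
    rw [Pi.sub_apply, bdd_emb x s hs, bdd_emb x' s hs, sub_self]
  have := isM_bdd_eq_zero h hb
  exact emb_inj (by rwa [sub_eq_zero] at this)

lemma mulP_sub_right (u v v' : ℕ → K) :
    mulP σ u (v - v') = mulP σ u v - mulP σ u v' := by
  have h : v - v' + v' = v := by abel
  have := mulP_add_right σ u (v - v') v'
  rw [h] at this
  rw [eq_sub_iff_add_eq, ← this]

lemma isM_fp : IsM σ a (fp a) :=
  ⟨1, sk 0 1, bdd_sk _ _, by rw [mulP_sk0]; exact (one_smul K (fp a)).symm⟩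

/-- the fundamental associativity criterion -/
lemma assoc_iff (hm0 : 0 < m) (x y z : Fin m → K) :
    pmul (⇑σ) a (pmul (⇑σ) a x y) z = pmul (⇑σ) a x (pmul (⇑σ) a y z) ↔
    IsM σ a (mulP σ (mulP σ (emb x) (emb y) - emb (pmul (⇑σ) a x y)) (emb z)) := by
  set Q1 := mulP σ (emb x) (emb y) - emb (pmul (⇑σ) a x y) with hQ1
  set A := mulP σ (emb x) (mulP σ (emb y) (emb z)) with hA
  set B := mulP σ (emb (pmul (⇑σ) a x y)) (emb z) with hB
  have hCa : IsM σ a (A - emb (pmul (⇑σ) a x (pmul (⇑σ) a y z))) := by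
    have h1 : IsM σ a (mulP σ (emb x) (emb (pmul (⇑σ) a y z))
        - emb (pmul (⇑σ) a x (pmul (⇑σ) a y z))) := isM_mul_sub_pmul hm0 _ _
    have h2 : IsM σ a (mulP σ (emb x)
        (mulP σ (emb y) (emb z) - emb (pmul (⇑σ) a y z))) :=
      isM_mull (bdd_emb x) (isM_mul_sub_pmul hm0 _ _)
    have e : A - emb (pmul (⇑σ) a x (pmul (⇑σ) a y z))
        = (mulP σ (emb x) (emb (pmul (⇑σ) a y z))
            - emb (pmul (⇑σ) a x (pmul (⇑σ) a y z)))
          + mulP σ (emb x) (mulP σ (emb y) (emb z) - emb (pmul (⇑σ) a y z)) := by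
      rw [mulP_sub_right, hA]; abel
    rw [e]
    exact isM_add h1 h2
  have hT2b : IsM σ a (B - emb (pmul (⇑σ) a (pmul (⇑σ) a x y) z)) :=
    isM_mul_sub_pmul hm0 _ _
  have hBA : B = A - mulP σ Q1 (emb z) := by
    have he : emb (pmul (⇑σ) a x y) = mulP σ (emb x) (emb y) - Q1 := by
      rw [hQ1]; abel
    rw [hB, he, mulP_sub_left, mulP_assoc σ (bdd_emb x) (bdd_emb y), hA]
  constructor
  · intro h
    have e : mulP σ Q1 (emb z)
        = (A - emb (pmul (⇑σ) a x (pmul (⇑σ) a y z)))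
          - (B - emb (pmul (⇑σ) a (pmul (⇑σ) a x y) z)) := by
      rw [hBA, h]; abel
    rw [e]
    exact isM_sub hCa hT2b
  · intro hQ
    have e : emb (pmul (⇑σ) a x (pmul (⇑σ) a y z))
          - emb (pmul (⇑σ) a (pmul (⇑σ) a x y) z)
        = ((B - emb (pmul (⇑σ) a (pmul (⇑σ) a x y) z)) + mulP σ Q1 (emb z))
          - (A - emb (pmul (⇑σ) a x (pmul (⇑σ) a y z))) := by
      rw [hBA]; abel
    have := emb_eq_of_isM_sub (h := by rw [e]; exact isM_sub (isM_add hT2b hQ) hCa)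
    exact this.symm

lemma passoc_of_fp (hm0 : 0 < m)
    (hfp : ∀ z : Fin m → K, IsM σ a (mulP σ (fp a) (emb z))) : PAssoc (⇑σ) a := by
  intro x y z
  rw [assoc_iff hm0]
  obtain ⟨N, q, hq, he⟩ := isM_mul_sub_pmul (σ := σ) (a := a) hm0 x y
  rw [he, mulP_assoc σ hq bdd_fp]
  exact isM_mull hq (hfp z)

/-- If `S_f` is not associative, the left nucleus is contained in `K`. -/
lemma nucl_coeffs (hm0 : 0 < m) {x : Fin m → K}
    (hx : ∀ y z, pmul (⇑σ) a (pmul (⇑σ) a x y) z = pmul (⇑σ) a x (pmul (⇑σ) a y z))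
    (hne : ¬ ∀ i : Fin m, 1 ≤ (i : ℕ) → x i = 0) : PAssoc (⇑σ) a := by
  classical
  push_neg at hne
  obtain ⟨i0, hi01, hi00⟩ := hne
  set S : Finset (Fin m) := Finset.univ.filter (fun i => x i ≠ 0) with hS
  have hSne : S.Nonempty := ⟨i0, by simp [hS, hi00]⟩
  set d : Fin m := S.max' hSne with hd
  have hxd : x d ≠ 0 := by
    have hdS : d ∈ S := S.max'_mem hSne
    exact (Finset.mem_filter.mp hdS).2
  have hmax : ∀ j : Fin m, (d : ℕ) < (j : ℕ) → x j = 0 := by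
    intro j hj
    by_contra hc
    have hjS : j ∈ S := by simp [hS, hc]
    have := S.le_max' j hjS
    rw [← hd] at this
    rw [Fin.le_def] at this
    omega
  have hd1 : 1 ≤ (d : ℕ) := by
    have hiS : i0 ∈ S := by simp [hS, hi00]
    have := S.le_max' i0 hiS
    rw [← hd, Fin.le_def] at this
    omega
  have hdm := d.isLt
  set y : Fin m := ⟨m - (d : ℕ), by omega⟩ with hy
  set yv : Fin m → K := fun i => if (i : ℕ) = m - (d : ℕ) then 1 else 0 with hyv
  have hey : emb yv = sk (m - (d : ℕ)) 1 := emb_delta _ (by omega)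
  -- the product x·y has quotient (x d) and so Q1 = (x d) • fp
  have hbdd : Bdd m (mulP σ (emb x) (emb yv) - (x d) • fp a) := by
    intro s hs
    rw [Pi.sub_apply, hey]
    simp only [mulP_sk_right, Pi.smul_apply]
    rw [if_pos (show m - (d : ℕ) ≤ s by omega), sig_one, mul_one]
    by_cases h2 : s = m
    · have : s - (m - (d : ℕ)) = (d : ℕ) := by omega
      rw [h2] at this ⊢
      rw [this]
      have : emb x (d : ℕ) = x d := by simp [emb, hdm]
      rw [this]
      have : fp a m = 1 := by simp [fp]
      rw [this, smul_eq_mul, mul_one, sub_self]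
    · have h3 : m < s := by omega
      have e1 : emb x (s - (m - (d : ℕ))) = 0 := by
        by_cases h4 : s - (m - (d : ℕ)) < m
        · have : x ⟨s - (m - (d : ℕ)), h4⟩ = 0 := hmax _ (by simp; omega)
          simp [emb, h4, this]
        · simp [emb, h4]
      have e2 : fp a s = 0 := by
        simp only [fp]; rw [if_neg h2, dif_neg (by omega)]
      rw [e1, e2, smul_eq_mul, mul_zero, sub_self]
  have hQeq : mulP σ (emb x) (emb yv) - emb (pmul (⇑σ) a x yv) = (x d) • fp a := by
    have h1 : IsM σ a ((mulP σ (emb x) (emb yv) - emb (pmul (⇑σ) a x yv))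
        - (x d) • fp a) := isM_sub (isM_mul_sub_pmul hm0 _ _) (isM_smul _ isM_fp)
    have h2 : Bdd m ((mulP σ (emb x) (emb yv) - emb (pmul (⇑σ) a x yv))
        - (x d) • fp a) := by
      intro s hs
      have e := hbdd s hs
      rw [Pi.sub_apply] at e ⊢
      rw [Pi.sub_apply, bdd_emb _ s hs, sub_zero]
      exact e
    have := isM_bdd_eq_zero h1 h2
    rwa [sub_eq_zero] at this
  have hfpz : ∀ z : Fin m → K, IsM σ a (mulP σ (fp a) (emb z)) := by
    intro z
    have hQz := (assoc_iff hm0 x yv z).mp (hx yv z)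
    rw [hQeq] at hQz
    have : mulP σ ((x d) • fp a) (emb z) = (x d) • mulP σ (fp a) (emb z) :=
      mulP_smul_left σ _ _ _
    rw [this] at hQz
    have := isM_smul (x d)⁻¹ hQz
    rwa [inv_smul_smul₀ hxd] at this
  exact passoc_of_fp hm0 hfpz

lemma tred_lt {s : ℕ} (h : s < m) :
    tred (⇑σ) m a s = fun i : Fin m => if (i : ℕ) = s then (1 : K) else 0 := by
  rw [tred, dif_pos h]

lemma delta_sum (g : Fin m → K) :
    (∑ i : Fin m, g i • fun j : Fin m => if (j : ℕ) = (i : ℕ) then (1 : K) else 0) = g := by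
  funext j
  rw [Finset.sum_apply, Finset.sum_eq_single j]
  · simp
  · intro i _ hi
    have : (j : ℕ) ≠ (i : ℕ) := fun hc => hi.symm (Fin.ext hc)
    simp [this]
  · simp

lemma pmul_smul_left (c : K) (x y : Fin m → K) :
    pmul (⇑σ) a (c • x) y = c • pmul (⇑σ) a x y := by
  simp only [pmul, Pi.smul_apply, smul_eq_mul, Finset.smul_sum, smul_smul, mul_assoc]

variable (hm0 : 0 < m)
include hm0

lemma pmul_iota_left (c : K) (y : Fin m → K) :
    pmul (⇑σ) a (iota K m c) y = c • y := by
  rw [pmul, Finset.sum_eq_single ⟨0, hm0⟩]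
  · have e1 : ∀ j : Fin m, ((0 : ℕ) + (j : ℕ)) = (j : ℕ) := fun j => by omega
    have : ∀ j : Fin m, tred (⇑σ) m a (((⟨0, hm0⟩ : Fin m) : ℕ) + (j : ℕ))
        = fun i : Fin m => if (i : ℕ) = (j : ℕ) then (1 : K) else 0 := by
      intro j
      simp only [Fin.val_mk, e1 j]
      exact tred_lt j.isLt
    simp only [this, iota, Fin.val_mk, if_pos rfl, Function.iterate_zero, id_eq]
    have hd := delta_sum (m := m) (K := K) (c • y)
    simpa using hd
  · intro i _ hi
    have : (i : ℕ) ≠ 0 := fun hc => hi (Fin.ext (by simpa using hc))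
    simp [iota, this]
  · simp

lemma pmul_iota_right (c : K) (x : Fin m → K) :
    pmul (⇑σ) a x (iota K m c) = fun i : Fin m => x i * (⇑σ)^[(i : ℕ)] c := by
  rw [pmul]
  have inner : ∀ i : Fin m, (∑ j : Fin m, (x i * (⇑σ)^[(i : ℕ)] (iota K m c j)) •
      tred (⇑σ) m a ((i : ℕ) + (j : ℕ)))
      = (x i * (⇑σ)^[(i : ℕ)] c) • (fun j : Fin m => if (j : ℕ) = (i : ℕ) then (1 : K) else 0) := by
    intro i
    rw [Finset.sum_eq_single ⟨0, hm0⟩]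
    · have e1 : (i : ℕ) + ((⟨0, hm0⟩ : Fin m) : ℕ) = (i : ℕ) := by simp
      rw [e1, tred_lt i.isLt]
      simp [iota]
    · intro j _ hj
      have : (j : ℕ) ≠ 0 := fun hc => hj (Fin.ext (by simpa using hc))
      simp [iota, this, sig_zero]
    · simp
  simp only [inner]
  exact delta_sum (fun i : Fin m => x i * (⇑σ)^[(i : ℕ)] c)

lemma iota_mul (c d : K) :
    pmul (⇑σ) a (iota K m c) (iota K m d) = iota K m (c * d) := by
  rw [pmul_iota_left hm0]
  funext i
  simp only [Pi.smul_apply, iota, smul_eq_mul, mul_ite, mul_zero]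

lemma t_iota_comm (c : K) :
    pmul (⇑σ) a (tvec K m) (iota K m c) = pmul (⇑σ) a (iota K m (σ c)) (tvec K m) := by
  rw [pmul_iota_right hm0, pmul_iota_left hm0]
  funext i
  by_cases h : (i : ℕ) = 1
  · simp [tvec, h]
  · simp [tvec, h]

end
end S5

lemma iota_add {K : Type*} [Field K] {m : ℕ} (c d : K) :
    iota K m (c + d) = iota K m c + iota K m d := by
  funext i
  by_cases h : (i : ℕ) = 0 <;> simp [iota, h]

lemma iota_inj {K : Type*} [Field K] {m : ℕ} (hm0 : 0 < m) {c d : K}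
    (h : iota K m c = iota K m d) : c = d := by
  have := congrFun h ⟨0, hm0⟩
  simpa [iota] using this

lemma eq_iota {K : Type*} [Field K] {m : ℕ} (hm0 : 0 < m) {x : Fin m → K}
    (h : ∀ i : Fin m, 1 ≤ (i : ℕ) → x i = 0) : x = iota K m (x ⟨0, hm0⟩) := by
  funext i
  by_cases hi : (i : ℕ) = 0
  · have : i = ⟨0, hm0⟩ := Fin.ext hi
    rw [this]
    simp [iota]
  · rw [h i (by omega)]
    simp [iota, hi]

lemma iota_smul_pone {K : Type*} [Field K] {m : ℕ} (c : K) :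
    iota K m c = c • pone K m := by
  funext i
  by_cases h : (i : ℕ) = 0 <;> simp [iota, pone, h]

/-- **Theorem 2.3 (ii).** Let `σ` have finite order `n < m − 1` and commute with every
`τ ∈ Aut_F(K)`, and let `f(t) = t^m − Σ_{i<m} a_i t^i` be not invariant (equivalently,
`S_f` not associative).  Then every `F`-algebra automorphism `H` of `S_f` restricts on
`K = Nuc_l(S_f)` to some `τ ∈ Aut_F(K)`, restricts to an `F`-automorphism of
`Nuc_r(S_f)`, and the only exponents occurring in `H(t)` are congruent to `1 mod n`,
i.e. `H(t) = k_1 t + k_{1+n} t^{1+n} + ⋯ + k_{1+sn} t^{1+sn}`. -/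
theorem stmt5 {K : Type*} [Field K] (σ : K ≃+* K) (hσ : σ ≠ RingEquiv.refl K)
    (m n : ℕ) (hm : 2 ≤ m) (a : Fin m → K)
    (hn0 : 0 < n) (hord : (⇑σ)^[n] = id)
    (hmin : ∀ j : ℕ, 0 < j → j < n → (⇑σ)^[j] ≠ id)
    (hnm : n < m - 1)
    (hcomm : ∀ τ : K ≃+* K, (∀ c : K, σ c = c → τ c = c) → ∀ x, σ (τ x) = τ (σ x))
    (hna : ¬ PAssoc (⇑σ) a) :
    ∀ H : (Fin m → K) → (Fin m → K), IsPetitAut (⇑σ) a H →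
      (∃ τ : K ≃+* K, (∀ c : K, σ c = c → τ c = c) ∧
        ∀ c : K, H (iota K m c) = iota K m (τ c))
      ∧ H '' (NucrP (⇑σ) a) = NucrP (⇑σ) a
      ∧ (∀ i : Fin m, H (tvec K m) i ≠ 0 → (i : ℕ) % n = 1) := by
  intro H hH
  have hm0 : 0 < m := by omega
  -- basic fact: H 0 = 0
  have hH0 : H 0 = 0 := by
    have h := hH.map_add 0 0
    rw [add_zero] at h
    have : H 0 + H 0 = H 0 + 0 := by rw [← h, add_zero]
    exact add_left_cancel this
  -- the left nucleus
  set NL : Set (Fin m → K) :=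
    {x | ∀ y z, pmul (⇑σ) a (pmul (⇑σ) a x y) z = pmul (⇑σ) a x (pmul (⇑σ) a y z)} with hNLdef
  have hNL_iota : ∀ c : K, iota K m c ∈ NL := by
    intro c y z
    rw [S5.pmul_iota_left (σ := σ) hm0, S5.pmul_smul_left, S5.pmul_iota_left (σ := σ) hm0]
  have hNLH : ∀ x ∈ NL, H x ∈ NL := by
    intro x hx y z
    obtain ⟨y', rfl⟩ := hH.bijective.2 y
    obtain ⟨z', rfl⟩ := hH.bijective.2 z
    rw [← hH.map_mul, ← hH.map_mul, hx y' z', hH.map_mul, hH.map_mul]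
  have hNL_iota_only : ∀ x ∈ NL, ∃ c : K, x = iota K m c := by
    intro x hx
    have h2 : ∀ i : Fin m, 1 ≤ (i : ℕ) → x i = 0 := by
      by_contra hc
      exact hna (S5.nucl_coeffs hm0 hx hc)
    exact ⟨x ⟨0, hm0⟩, eq_iota hm0 h2⟩
  -- τ on K
  have hiotaH : ∀ c : K, ∃ c' : K, H (iota K m c) = iota K m c' := by
    intro c
    obtain ⟨c', hc'⟩ := hNL_iota_only _ (hNLH _ (hNL_iota c))
    exact ⟨c', hc'⟩
  choose τ hτ using hiotaH
  have hτ_add : ∀ c d, τ (c + d) = τ c + τ d := by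
    intro c d
    apply iota_inj hm0
    rw [← hτ, iota_add, iota_add, hH.map_add, hτ, hτ]
  have hτ_mul : ∀ c d, τ (c * d) = τ c * τ d := by
    intro c d
    apply iota_inj hm0
    rw [← hτ, ← S5.iota_mul (σ := σ) (a := a) hm0, hH.map_mul, hτ, hτ,
      S5.iota_mul (σ := σ) (a := a) hm0]
  have hτ_one : τ 1 = 1 := by
    apply iota_inj hm0
    have h1 : iota K m (1 : K) = pone K m := by
      funext i; simp [iota, pone]
    rw [← hτ, h1, hH.map_one]
  have hτ_zero : τ 0 = 0 := by
    apply iota_inj hm0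
    have h0 : iota K m (0 : K) = 0 := by funext i; simp [iota]
    rw [← hτ, h0, hH0]
  let τhom : K →+* K :=
    { toFun := τ, map_one' := hτ_one, map_mul' := hτ_mul,
      map_zero' := hτ_zero, map_add' := hτ_add }
  have hτ_inj : Function.Injective τ := τhom.injective
  have hτ_surj : Function.Surjective τ := by
    intro d
    obtain ⟨w, hw⟩ := hH.bijective.2 (iota K m d)
    have hwNL : w ∈ NL := by
      intro y z
      apply hH.bijective.1
      rw [hH.map_mul, hH.map_mul, hH.map_mul, hH.map_mul, hw]
      exact hNL_iota d (H y) (H z)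
    obtain ⟨c, rfl⟩ := hNL_iota_only _ hwNL
    exact ⟨c, iota_inj hm0 (by rw [← hτ, hw])⟩
  let τeq : K ≃+* K := RingEquiv.ofBijective τhom ⟨hτ_inj, hτ_surj⟩
  have hτeq_coe : ∀ c, τeq c = τ c := fun c => rfl
  have hτ_fix : ∀ c : K, σ c = c → τeq c = c := by
    intro c hc
    rw [hτeq_coe]
    apply iota_inj hm0
    rw [← hτ, iota_smul_pone, hH.map_smul c hc, hH.map_one, ← iota_smul_pone]
  refine ⟨⟨τeq, hτ_fix, fun c => by rw [hτ, hτeq_coe]⟩, ?_, ?_⟩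
  · -- right nucleus preserved
    ext u
    constructor
    · rintro ⟨w, hw, rfl⟩
      intro x y
      obtain ⟨x', rfl⟩ := hH.bijective.2 x
      obtain ⟨y', rfl⟩ := hH.bijective.2 y
      rw [← hH.map_mul, ← hH.map_mul, ← hH.map_mul, ← hH.map_mul, hw x' y']
    · intro hu
      obtain ⟨w, rfl⟩ := hH.bijective.2 u
      refine ⟨w, ?_, rfl⟩
      intro x y
      apply hH.bijective.1
      rw [hH.map_mul, hH.map_mul, hH.map_mul, hH.map_mul]
      exact hu (H x) (H y)
  · -- exponents of H(t)
    intro i hi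
    have key : ∀ c : K, H (tvec K m) i * (⇑σ)^[(i : ℕ)] (τ c) = τ (σ c) * H (tvec K m) i := by
      intro c
      have h1 := congrArg H (S5.t_iota_comm (σ := σ) (a := a) hm0 c)
      rw [hH.map_mul, hH.map_mul, hτ, hτ] at h1
      rw [S5.pmul_iota_right (σ := σ) (a := a) hm0, S5.pmul_iota_left (σ := σ) (a := a) hm0] at h1
      have := congrFun h1 i
      simpa using this
    have key2 : ∀ c : K, (⇑σ)^[(i : ℕ)] (τ c) = τ (σ c) := by
      intro c
      have h := key c
      rw [mul_comm (τ (σ c)) (H (tvec K m) i)] at h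
      exact mul_left_cancel₀ hi h
    have hcomm_it : ∀ p (c : K), (⇑σ)^[p] (τ c) = τ ((⇑σ)^[p] c) := by
      intro p
      induction p with
      | zero => intro c; simp
      | succ k ih =>
        intro c
        rw [Function.iterate_succ_apply', ih, Function.iterate_succ_apply']
        exact hcomm τeq hτ_fix _
    have key3 : ∀ c : K, (⇑σ)^[(i : ℕ)] c = σ c := by
      intro c
      apply hτ_inj
      rw [← hcomm_it, key2]
    have hi1 : 1 ≤ (i : ℕ) := by
      by_contra hc
      have h0 : (i : ℕ) = 0 := by omega
      apply hσ
      apply RingEquiv.ext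
      intro c
      have := key3 c
      rw [h0] at this
      simpa using this.symm
    have hstep : ∀ c : K, (⇑σ)^[(i : ℕ) - 1] c = c := by
      intro c
      have h1 : (⇑σ)^[((i : ℕ) - 1) + 1] c = σ c := by
        rw [show (i : ℕ) - 1 + 1 = (i : ℕ) by omega]
        exact key3 c
      have h2 : (⇑σ)^[((i : ℕ) - 1) + 1] c = σ ((⇑σ)^[(i : ℕ) - 1] c) :=
        Function.iterate_succ_apply' _ _ _
      exact σ.injective (h2 ▸ h1)
    have hn2 : 2 ≤ n := by
      by_contra hc
      have hn1 : n = 1 := by omega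
      apply hσ
      apply RingEquiv.ext
      intro c
      have := congrFun hord c
      rw [hn1] at this
      simpa using this
    have hnq : ∀ q (c : K), (⇑σ)^[n * q] c = c := by
      intro q
      induction q with
      | zero => intro c; simp
      | succ k ih =>
        intro c
        have e : n * (k + 1) = n * k + n := by ring
        rw [e, Function.iterate_add_apply, ih ((⇑σ)^[n] c)]
        exact congrFun hord c
    set r := ((i : ℕ) - 1) % n with hr
    have hrid : ∀ c : K, (⇑σ)^[r] c = c := by
      intro c
      have e : (i : ℕ) - 1 = n * (((i : ℕ) - 1) / n) + r := by
        rw [hr]; exact (Nat.div_add_mod _ _).symm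
      have h1 := hstep c
      rw [e, Function.iterate_add_apply, hnq] at h1
      exact h1
    have hr0 : r = 0 := by
      by_contra hc
      exact hmin r (by omega) (Nat.mod_lt _ hn0) (funext hrid)
    obtain ⟨q, hq⟩ : n ∣ (i : ℕ) - 1 := Nat.dvd_of_mod_eq_zero hr0
    rw [show (i : ℕ) = n * q + 1 by omega, Nat.mul_add_mod, Nat.mod_eq_of_lt (by omega)]
end

section
/- Let K/F be a finite Galois field extension with norm N_{K/F}, σ ∈ Gal(K/F) of order n with Fix(σ) = F, and τ ∈ Gal(K/F) with σ ∘ τ = τ ∘ σ. Let f(t) = t^m − Σ_{i=0}^{m−1} a_i t^i ∈ K[t;σ] and suppose k ∈ K^× satisfies τ(a_i) = (∏_{l=i}^{m−1} σ^l(k))·a_i for all i ∈ {0,…,m−1}. Then: for every i with a_i ≠ 0, N_{K/F}(k) is an (m−i)-th root of unity; in particular, if a_0 ≠ 0 then N_{K/F}(k)^m = 1, and if a_{m−1} ≠ 0 then N_{K/F}(k) = 1. Moreover, if a_{m−1} ∈ Fix(τ)^× then k = 1. -/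
section NormOfIterate

variable {R S : Type*} [CommRing R] [CommRing S] [Algebra R S]

theorem Algebra.norm_iterate_algEquiv (σ : S ≃ₐ[R] S) (l : ℕ) (x : S) :
    Algebra.norm R ((⇑σ)^[l] x) = Algebra.norm R x := by
  rw [← AlgEquiv.coe_pow, Algebra.norm_eq_of_algEquiv]

theorem Algebra.norm_prod_Ico_iterate (σ : S ≃ₐ[R] S) (i m : ℕ) (x : S) :
    Algebra.norm R (∏ l ∈ Finset.Ico i m, (⇑σ)^[l] x) = Algebra.norm R x ^ (m - i) := by
  simp only [map_prod, Algebra.norm_iterate_algEquiv, Finset.prod_const, Nat.card_Ico]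

end NormOfIterate

theorem Algebra.norm_eq_one_of_algEquiv_apply_eq_mul {F K : Type*} [Field F] [Field K]
    [Algebra F K] [FiniteDimensional F K] (τ : K ≃ₐ[F] K) {c x : K} (hx : x ≠ 0)
    (h : τ x = c * x) : Algebra.norm F c = 1 := by
  have hnorm := congrArg (Algebra.norm F) h
  rw [Algebra.norm_eq_of_algEquiv, map_mul] at hnorm
  have hx' : Algebra.norm F x ≠ 0 := Algebra.norm_ne_zero_iff.mpr hx
  exact (mul_eq_right₀ hx').mp hnorm.symm

/-- **Proposition 3.1.** Let `K/F` be a finite Galois field extension with norm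
`N_{K/F}`, `σ ∈ Gal(K/F)` with `Fix(σ) = F`, and `τ ∈ Gal(K/F)` commuting with `σ`.
If `k ∈ K^×` satisfies `τ(a_i) = (Π_{l=i}^{m−1} σ^l(k))·a_i` for all `i`, then for
every `i` with `a_i ≠ 0` the norm `N_{K/F}(k)` is an `(m−i)`-th root of unity; in
particular `N_{K/F}(k)^m = 1` if `a₀ ≠ 0` and `N_{K/F}(k) = 1` if `a_{m−1} ≠ 0`;
and if `a_{m−1} ∈ Fix(τ)^×` then `k = 1`. -/
theorem stmt9 {F K : Type*} [Field F] [Field K] [Algebra F K]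
    [FiniteDimensional F K]
    (σ τ : K ≃ₐ[F] K)
    (m : ℕ) (hm : 2 ≤ m) (a : Fin m → K)
    (k : K)
    (hcond : ∀ i : Fin m, τ (a i) = (∏ l ∈ Finset.Ico (i : ℕ) m, (⇑σ)^[l] k) * a i) :
    (∀ i : Fin m, a i ≠ 0 → Algebra.norm F k ^ (m - (i : ℕ)) = 1)
    ∧ (a ⟨0, by omega⟩ ≠ 0 → Algebra.norm F k ^ m = 1)
    ∧ (a ⟨m - 1, by omega⟩ ≠ 0 → Algebra.norm F k = 1)
    ∧ (a ⟨m - 1, by omega⟩ ≠ 0 → τ (a ⟨m - 1, by omega⟩) = a ⟨m - 1, by omega⟩ → k = 1) := by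
  have hroot : ∀ i : Fin m, a i ≠ 0 → Algebra.norm F k ^ (m - (i : ℕ)) = 1 := fun i hi => by
    rw [← Algebra.norm_prod_Ico_iterate σ]
    exact Algebra.norm_eq_one_of_algEquiv_apply_eq_mul τ hi (hcond i)
  have hlast : (∏ l ∈ Finset.Ico (m - 1) m, (⇑σ)^[l] k) = (σ ^ (m - 1)) k := by
    rw [Nat.Ico_pred_singleton (by omega), Finset.prod_singleton, AlgEquiv.coe_pow]
  refine ⟨hroot, fun h0 => by simpa using hroot ⟨0, by omega⟩ h0, fun h0 => ?_, fun h0 hfixed => ?_⟩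
  · simpa [show m - (m - 1) = 1 by omega] using hroot ⟨m - 1, by omega⟩ h0
  · have h := hcond ⟨m - 1, by omega⟩
    rw [hfixed, hlast, eq_comm, mul_eq_right₀ h0] at h
    exact (map_eq_one_iff _ (σ ^ (m - 1)).injective).mp h
end
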